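/- arXiv:1401.3232 — 4 statements merged into one kernel-verified Lean document; each statement's English description precedes it below -/
import Mathlib

section
/- For every set M, every team X of assignments into M, all tuples of variables x̄, ȳ, z̄ and every variable v: X satisfies the conditional independence atom ȳv ⊥_{x̄} z̄ if and only if X satisfies both ȳ ⊥_{x̄v} z̄ and v ⊥_{x̄} z̄ (here x̄v denotes the tuple x̄ extended by v, and ȳv the tuple ȳ extended by v). -/
/-!
These are the graphoid rules of weak union, decomposition and contraction for team
independence, with the variable `v` in the role of the moved tuple. The only step needing an
idea is contraction: given `s, s'` agreeing on `x̄`, first use `v ⊥_{x̄} z̄` to get `t` that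
agrees with `s` on `x̄v` and with `s'` on `z̄`, then apply `ȳ ⊥_{x̄v} z̄` to `s` and `t`.
-/

/-- A team over a set `M` with domain `D` is a set of assignments `s : D → M`.
`X` satisfies the conditional independence atom `ȳ ⊥_{x̄} z̄` if for all `s, s' ∈ X`
with `s(x̄) = s'(x̄)` there is `s'' ∈ X` with `s''(x̄) = s(x̄)`, `s''(ȳ) = s(ȳ)` and
`s''(z̄) = s'(z̄)`. -/
def indepAtom {D M : Type*} (X : Set (D → M)) (xs ys zs : List D) : Prop :=
  ∀ s ∈ X, ∀ s' ∈ X, xs.map s = xs.map s' →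
    ∃ s'' ∈ X, xs.map s'' = xs.map s ∧ ys.map s'' = ys.map s ∧ zs.map s'' = zs.map s'

theorem List.map_append_eq_map_append_iff {α β : Type*} {l m : List α} {f g : α → β} :
    (l ++ m).map f = (l ++ m).map g ↔ l.map f = l.map g ∧ m.map f = m.map g := by
  simp only [List.map_eq_map_iff, List.forall_mem_append]

namespace indepAtom

variable {D M : Type*} {X : Set (D → M)} {xs ys ws zs : List D}

theorem mono_left {ys' : List D} (h : indepAtom X xs ys' zs) (hys : ys ⊆ ys') :
    indepAtom X xs ys zs := by
  intro s hs s' hs' hx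
  obtain ⟨s'', hs'', hx'', hy'', hz''⟩ := h s hs s' hs' hx
  rw [List.map_eq_map_iff] at hy''
  exact ⟨s'', hs'', hx'', List.map_eq_map_iff.2 fun a ha => hy'' a (hys ha), hz''⟩

theorem weak_union (h : indepAtom X xs (ys ++ ws) zs) : indepAtom X (xs ++ ws) ys zs := by
  intro s hs s' hs' hxw
  rw [List.map_append_eq_map_append_iff] at hxw
  obtain ⟨s'', hs'', hx'', hyw'', hz''⟩ := h s hs s' hs' hxw.1
  rw [List.map_append_eq_map_append_iff] at hyw''
  exact ⟨s'', hs'', List.map_append_eq_map_append_iff.2 ⟨hx'', hyw''.2⟩, hyw''.1, hz''⟩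

theorem contraction (hy : indepAtom X (xs ++ ws) ys zs) (hw : indepAtom X xs ws zs) :
    indepAtom X xs (ys ++ ws) zs := by
  intro s hs s' hs' hx
  obtain ⟨t, ht, htx, htw, htz⟩ := hw s hs s' hs' hx
  have hst : (xs ++ ws).map s = (xs ++ ws).map t :=
    List.map_append_eq_map_append_iff.2 ⟨htx.symm, htw.symm⟩
  obtain ⟨s'', hs'', hxw'', hy'', hz''⟩ := hy s hs t ht hst
  rw [List.map_append_eq_map_append_iff] at hxw''
  exact ⟨s'', hs'', hxw''.1, List.map_append_eq_map_append_iff.2 ⟨hy'', hxw''.2⟩,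
    hz''.trans htz⟩

end indepAtom

/-- `X` satisfies `ȳv ⊥_{x̄} z̄` iff `X` satisfies both `ȳ ⊥_{x̄v} z̄` and `v ⊥_{x̄} z̄`. -/
theorem indep_extend_iff {D M : Type*} (X : Set (D → M)) (xs ys zs : List D) (v : D) :
    indepAtom X xs (ys ++ [v]) zs ↔
      indepAtom X (xs ++ [v]) ys zs ∧ indepAtom X xs [v] zs :=
  ⟨fun h => ⟨h.weak_union, h.mono_left (List.subset_append_right ys [v])⟩,
    fun ⟨hy, hv⟩ => hy.contraction hv⟩
end

section
/- Let M = {0,1,2} and let X = {s₀, s₁, s₂} be the team with domain {u,v,w} given by s₀(u,v,w) = (0,1,2), s₁(u,v,w) = (1,0,1), s₂(u,v,w) = (2,1,0). Then: (a) there is NO partition of X into disjoint sets Y and Z with Y ∪ Z = X such that {s(u) : s ∈ Y} ⊆ {s(v) : s ∈ Y} and {s(w) : s ∈ Z} ⊆ {s(v) : s ∈ Z}; but (b) for the team X[M/x] = {s[m/x] : s ∈ X, m ∈ M} obtained by extending each assignment with every possible value for a new variable x, it holds both that {s(w) : s ∈ X[M/x]} ⊆ {s(x) : s ∈ X[M/x]}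 and that there IS a partition of X[M/x] into disjoint Y′ and Z′ with Y′ ∪ Z′ = X[M/x], {s(u) : s ∈ Y′} ⊆ {s(v) : s ∈ Y′} and {s(w) : s ∈ Z′} ⊆ {s(v) : s ∈ Z′}. Consequently, under strict team semantics, M ⊨_X ∀x(w ⊆ x ∧ (u ⊆ v ∨ w ⊆ v)) but M ⊭_X u ⊆ v ∨ w ⊆ v. -/
open FirstOrder FirstOrder.Language FirstOrder.Language.Structure

namespace TeamSem

universe u v w

/-- Formulas of team logic in negation normal form over a first-order language `L`,
with variables in `ℕ`: first-order literals, dependence atoms `=(x̄, y)`,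
conditional independence atoms `ȳ ⊥_{x̄} z̄`, inclusion atoms `x̄ ⊆ ȳ`,
conjunction, disjunction and quantifiers. -/
inductive TF (L : FirstOrder.Language.{u, v}) : Type (max u v) where
  | rel : {n : ℕ} → L.Relations n → (Fin n → L.Term ℕ) → TF L
  | nrel : {n : ℕ} → L.Relations n → (Fin n → L.Term ℕ) → TF L
  | teq : L.Term ℕ → L.Term ℕ → TF L
  | tne : L.Term ℕ → L.Term ℕ → TF L
  | dep : List ℕ → ℕ → TF L
  | indep : List ℕ → List ℕ → List ℕ → TF L
  | inc : List ℕ → List ℕ → TF L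
  | and : TF L → TF L → TF L
  | or : TF L → TF L → TF L
  | ex : ℕ → TF L → TF L
  | all : ℕ → TF L → TF L

variable {L : FirstOrder.Language.{u, v}}

/-- The variables occurring in a term. -/
def tvars : L.Term ℕ → Set ℕ
  | .var n => {n}
  | .func _ ts => ⋃ i, tvars (ts i)

/-- Realization of a term under a partial assignment (an assignment whose domain is
the set of variables where it takes a `some` value). -/
def oreal {M : Type w} [L.Structure M] (s : ℕ → Option M) : L.Term ℕ → Option M
  | .var n => s n
  | .func f ts =>
      if h : ∀ i, (oreal s (ts i)).isSome then
        some (funMap f fun i => (oreal s (ts i)).get (h i))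
      else none

/-- The set of free variables of a team-logic formula. -/
def freeVars : TF L → Set ℕ
  | .rel _ ts => ⋃ i, tvars (ts i)
  | .nrel _ ts => ⋃ i, tvars (ts i)
  | .teq t u => tvars t ∪ tvars u
  | .tne t u => tvars t ∪ tvars u
  | .dep xs y => {n | n ∈ xs} ∪ {y}
  | .indep xs ys zs => {n | n ∈ xs ++ ys ++ zs}
  | .inc xs ys => {n | n ∈ xs ++ ys}
  | .and φ ψ => freeVars φ ∪ freeVars ψ
  | .or φ ψ => freeVars φ ∪ freeVars ψ
  | .ex v φ => freeVars φ \ {v}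
  | .all v φ => freeVars φ \ {v}

/-- The list of quantified (bound) variables of a formula, with multiplicity. -/
def boundVars : TF L → List ℕ
  | .and φ ψ => boundVars φ ++ boundVars ψ
  | .or φ ψ => boundVars φ ++ boundVars ψ
  | .ex v φ => v :: boundVars φ
  | .all v φ => v :: boundVars φ
  | _ => []

/-- The number of universal quantifiers occurring in a formula. -/
def uCount : TF L → ℕ
  | .and φ ψ => uCount φ + uCount ψ
  | .or φ ψ => uCount φ + uCount ψ
  | .ex _ φ => uCount φ
  | .all _ φ => uCount φ + 1
  | _ => 0

/-- A dependence atom occurs in the formula. -/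
def hasDep : TF L → Prop
  | .dep _ _ => True
  | .and φ ψ => hasDep φ ∨ hasDep ψ
  | .or φ ψ => hasDep φ ∨ hasDep ψ
  | .ex _ φ => hasDep φ
  | .all _ φ => hasDep φ
  | _ => False

/-- An independence atom occurs in the formula. -/
def hasIndep : TF L → Prop
  | .indep _ _ _ => True
  | .and φ ψ => hasIndep φ ∨ hasIndep ψ
  | .or φ ψ => hasIndep φ ∨ hasIndep ψ
  | .ex _ φ => hasIndep φ
  | .all _ φ => hasIndep φ
  | _ => False

/-- An inclusion atom occurs in the formula. -/
def hasInc : TF L → Prop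
  | .inc _ _ => True
  | .and φ ψ => hasInc φ ∨ hasInc ψ
  | .or φ ψ => hasInc φ ∨ hasInc ψ
  | .ex _ φ => hasInc φ
  | .all _ φ => hasInc φ
  | _ => False

/-- Quantifier-free formulas. -/
def quantFree : TF L → Prop
  | .and φ ψ => quantFree φ ∧ quantFree ψ
  | .or φ ψ => quantFree φ ∧ quantFree ψ
  | .ex _ _ => False
  | .all _ _ => False
  | _ => True

/-- First-order formulas: no dependence, independence or inclusion atoms. -/
def isFO : TF L → Prop
  | .dep _ _ => False
  | .indep _ _ _ => False
  | .inc _ _ => False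
  | .and φ ψ => isFO φ ∧ isFO ψ
  | .or φ ψ => isFO φ ∧ isFO ψ
  | .ex _ φ => isFO φ
  | .all _ φ => isFO φ
  | _ => True

/-- A dependency atom (dependence, independence or inclusion atom). -/
def isAtom : TF L → Prop
  | .dep _ _ => True
  | .indep _ _ _ => True
  | .inc _ _ => True
  | _ => False

/-- A conjunction of dependency atoms. -/
def isAtomConj : TF L → Prop
  | .and φ ψ => isAtomConj φ ∧ isAtomConj ψ
  | φ => isAtom φ

/-- Strict team semantics.  A team is a set of partial assignments `ℕ → Option M`;
a variable is in the domain of an assignment iff the assignment gives it a `some`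
value. -/
def strictSat (M : Type w) [L.Structure M] : Set (ℕ → Option M) → TF L → Prop
  | X, .rel R ts => ∀ s ∈ X, ∃ v, (∀ i, oreal s (ts i) = some (v i)) ∧ RelMap R v
  | X, .nrel R ts => ∀ s ∈ X, ∃ v, (∀ i, oreal s (ts i) = some (v i)) ∧ ¬ RelMap R v
  | X, .teq t u => ∀ s ∈ X, ∃ a : M, oreal s t = some a ∧ oreal s u = some a
  | X, .tne t u => ∀ s ∈ X, ∃ a b : M, oreal s t = some a ∧ oreal s u = some b ∧ a ≠ b
  | X, .dep xs y => ∀ s ∈ X, ∀ s' ∈ X, xs.map s = xs.map s' → s y = s' y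
  | X, .indep xs ys zs => ∀ s ∈ X, ∀ s' ∈ X, xs.map s = xs.map s' →
      ∃ s'' ∈ X, xs.map s'' = xs.map s ∧ ys.map s'' = ys.map s ∧ zs.map s'' = zs.map s'
  | X, .inc xs ys => ∀ s ∈ X, ∃ s' ∈ X, xs.map s = ys.map s'
  | X, .and φ ψ => strictSat M X φ ∧ strictSat M X ψ
  | X, .or φ ψ => ∃ Y Z, Y ∪ Z = X ∧ Y ∩ Z = ∅ ∧ strictSat M Y φ ∧ strictSat M Z ψ
  | X, .ex v φ => ∃ F : (ℕ → Option M) → M,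
      strictSat M ((fun s => Function.update s v (some (F s))) '' X) φ
  | X, .all v φ =>
      strictSat M {t | ∃ s ∈ X, ∃ m : M, t = Function.update s v (some m)} φ

/-- Lax team semantics: the splitting in the disjunction need not be disjoint, and
the existential quantifier may pick a nonempty set of witnesses for each assignment. -/
def laxSat (M : Type w) [L.Structure M] : Set (ℕ → Option M) → TF L → Prop
  | X, .rel R ts => ∀ s ∈ X, ∃ v, (∀ i, oreal s (ts i) = some (v i)) ∧ RelMap R v
  | X, .nrel R ts => ∀ s ∈ X, ∃ v, (∀ i, oreal s (ts i) = some (v i)) ∧ ¬ RelMap R v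
  | X, .teq t u => ∀ s ∈ X, ∃ a : M, oreal s t = some a ∧ oreal s u = some a
  | X, .tne t u => ∀ s ∈ X, ∃ a b : M, oreal s t = some a ∧ oreal s u = some b ∧ a ≠ b
  | X, .dep xs y => ∀ s ∈ X, ∀ s' ∈ X, xs.map s = xs.map s' → s y = s' y
  | X, .indep xs ys zs => ∀ s ∈ X, ∀ s' ∈ X, xs.map s = xs.map s' →
      ∃ s'' ∈ X, xs.map s'' = xs.map s ∧ ys.map s'' = ys.map s ∧ zs.map s'' = zs.map s'
  | X, .inc xs ys => ∀ s ∈ X, ∃ s' ∈ X, xs.map s = ys.map s'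
  | X, .and φ ψ => laxSat M X φ ∧ laxSat M X ψ
  | X, .or φ ψ => ∃ Y Z, Y ∪ Z = X ∧ laxSat M Y φ ∧ laxSat M Z ψ
  | X, .ex v φ => ∃ H : (ℕ → Option M) → Set M, (∀ s ∈ X, (H s).Nonempty) ∧
      laxSat M {t | ∃ s ∈ X, ∃ m ∈ H s, t = Function.update s v (some m)} φ
  | X, .all v φ =>
      laxSat M {t | ∃ s ∈ X, ∃ m : M, t = Function.update s v (some m)} φ

/-- Ordinary (Tarskian) first-order satisfaction by a single assignment, for
first-order formulas.  (The value on the dependency atoms is irrelevant.) -/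
def foSat (M : Type w) [L.Structure M] : (ℕ → Option M) → TF L → Prop
  | s, .rel R ts => ∃ v, (∀ i, oreal s (ts i) = some (v i)) ∧ RelMap R v
  | s, .nrel R ts => ∃ v, (∀ i, oreal s (ts i) = some (v i)) ∧ ¬ RelMap R v
  | s, .teq t u => ∃ a : M, oreal s t = some a ∧ oreal s u = some a
  | s, .tne t u => ∃ a b : M, oreal s t = some a ∧ oreal s u = some b ∧ a ≠ b
  | s, .and φ ψ => foSat M s φ ∧ foSat M s ψ
  | s, .or φ ψ => foSat M s φ ∨ foSat M s ψ
  | s, .ex v φ => ∃ m : M, foSat M (Function.update s v (some m)) φ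
  | s, .all v φ => ∀ m : M, foSat M (Function.update s v (some m)) φ
  | _, _ => True

/-- The empty assignment. -/
def emptyAssign (M : Type w) : ℕ → Option M := fun _ => none

/-- A sentence `φ` is true in `M` if the team `{∅}` consisting of the empty
assignment satisfies `φ` (strict semantics). -/
def tTrue (M : Type w) [L.Structure M] (φ : TF L) : Prop :=
  strictSat M {emptyAssign M} φ

/-- A sentence of `FO(C)(k∀)`: every variable is quantified exactly once, it has no
free variables, and at most `k` universal quantifiers occur. -/
def sentenceKAll (φ : TF L) (k : ℕ) : Prop :=
  freeVars φ = ∅ ∧ (boundVars φ).Nodup ∧ uCount φ ≤ k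

/-- Universal quantifier block. -/
def alls : List ℕ → TF L → TF L
  | [], φ => φ
  | v :: vs, φ => .all v (alls vs φ)

/-- Existential quantifier block. -/
def exs : List ℕ → TF L → TF L
  | [], φ => φ
  | v :: vs, φ => .ex v (exs vs φ)

end TeamSem

namespace TeamSem

open FirstOrder FirstOrder.Language

instance : FirstOrder.Language.empty.Structure (Fin 3) :=
  FirstOrder.Language.emptyStructure

/-- The team `X = {s₀, s₁, s₂}` over `M = {0,1,2}` with domain `{u, v, w}`
(encoded as the coordinates `0, 1, 2`), given by `s₀(u,v,w) = (0,1,2)`,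
`s₁(u,v,w) = (1,0,1)`, `s₂(u,v,w) = (2,1,0)`. -/
def exTeam : Set (Fin 3 → Fin 3) := {![0, 1, 2], ![1, 0, 1], ![2, 1, 0]}

/-- The team `X[M/x]` obtained by extending each assignment of `exTeam` with every
possible value for a new variable `x` (the fourth coordinate). -/
def exTeamExt : Set (Fin 4 → Fin 3) :=
  {t | ∃ s ∈ exTeam, ∃ m : Fin 3, t = Fin.snoc s m}

/-- The same team as a team of partial assignments `ℕ → Option (Fin 3)` with
domain `{u, v, w} = {0, 1, 2}`. -/
def exTeam' : Set (ℕ → Option (Fin 3)) :=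
  (fun s : Fin 3 → Fin 3 =>
    fun n : ℕ => if h : n < 3 then some (s ⟨n, h⟩) else none) '' exTeam

/-! In `X` the assignment `s₁` is the only one with `v = 0`, and both disjuncts need it:
`s₂` has `u = 2`, a value `v` never takes, so `s₂` lies in `Z`, where its `w = 0` calls for `s₁`;
`s₀` cannot lie in `Z` (its `w = 2`), and in `Y` its `u = 0` calls for `s₁` as well. In `X[M/x]`
there are three copies of `s₁`, which can be shared out between the two sides.

The semantic statements are the same facts read through the injective encoding of total
assignments `Fin n → M` as partial ones, under which strict disjunction is disjoint splitting and
`∀x` on the fresh variable `x = n` is `extendTeam`. -/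

section Encoding

variable {L : FirstOrder.Language.{u, v}} {M : Type w} [L.Structure M] {n : ℕ}

def toPartial (s : Fin n → M) : ℕ → Option M :=
  fun k => if h : k < n then some (s ⟨k, h⟩) else none

theorem toPartial_apply_val (s : Fin n → M) (i : Fin n) : toPartial s i = some (s i) := by
  simp [toPartial]

theorem toPartial_injective : Function.Injective (toPartial : (Fin n → M) → ℕ → Option M) :=
  fun s s' h => funext fun i => Option.some_injective _ <| by
    rw [← toPartial_apply_val, ← toPartial_apply_val, h]

theorem update_toPartial_eq_snoc (s : Fin n → M) (m : M) :
    Function.update (toPartial s) n (some m) = toPartial (Fin.snoc s m : Fin (n + 1) → M) := by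
  funext k
  by_cases hk : k = n
  · subst hk
    simp [toPartial, Fin.snoc]
  · simp only [toPartial, Function.update_of_ne hk, Fin.snoc]
    split_ifs <;> first | rfl | omega

def extendTeam (X : Set (Fin n → M)) : Set (Fin (n + 1) → M) :=
  {t | ∃ s ∈ X, ∃ m : M, t = Fin.snoc s m}

theorem image_castSucc_subset_image_last_extendTeam (X : Set (Fin n → M)) (i : Fin n) :
    (fun t => t i.castSucc) '' extendTeam X ⊆ (fun t => t (Fin.last n)) '' extendTeam X := by
  rintro _ ⟨_, ⟨s, hs, m, rfl⟩, rfl⟩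
  exact ⟨Fin.snoc s (s i), ⟨s, hs, _, rfl⟩, by simp⟩

theorem strictSat_inc_image_toPartial_iff (X : Set (Fin n → M)) (i j : Fin n) :
    strictSat (L := L) M (toPartial '' X) (.inc [i] [j]) ↔
      (fun s => s i) '' X ⊆ (fun s => s j) '' X := by
  simp only [strictSat, Set.forall_mem_image, Set.exists_mem_image, List.map_cons, List.map_nil,
    List.cons.injEq, and_true, toPartial_apply_val, Option.some.injEq]
  rw [Set.image_subset_iff]
  simp only [Set.subset_def, Set.mem_preimage, Set.mem_image, eq_comm]

theorem strictSat_all_image_toPartial_iff (X : Set (Fin n → M)) (φ : TF L) :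
    strictSat M (toPartial '' X) (.all n φ) ↔ strictSat M (toPartial '' extendTeam X) φ := by
  suffices {t | ∃ s ∈ toPartial '' X, ∃ m : M, t = Function.update s n (some m)} =
      toPartial '' extendTeam X by
    rw [strictSat, this]
  ext t
  simp [extendTeam, update_toPartial_eq_snoc, eq_comm]

theorem strictSat_or_image_iff {α : Type*} {f : α → ℕ → Option M} (hf : Function.Injective f)
    (X : Set α) (φ ψ : TF L) :
    strictSat M (f '' X) (.or φ ψ) ↔
      ∃ Y Z, Y ∪ Z = X ∧ Y ∩ Z = ∅ ∧ strictSat M (f '' Y) φ ∧ strictSat M (f '' Z) ψ := by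
  constructor
  · rintro ⟨Y, Z, hYZ, hdisj, hY, hZ⟩
    refine ⟨f ⁻¹' Y, f ⁻¹' Z, ?_, ?_, ?_, ?_⟩
    · rw [← Set.preimage_union, hYZ, hf.preimage_image]
    · rw [← Set.preimage_inter, hdisj, Set.preimage_empty]
    · rwa [Set.image_preimage_eq_of_subset ((hYZ ▸ Set.subset_union_left).trans
        (Set.image_subset_range f X))]
    · rwa [Set.image_preimage_eq_of_subset ((hYZ ▸ Set.subset_union_right).trans
        (Set.image_subset_range f X))]
  · rintro ⟨Y, Z, rfl, hdisj, hY, hZ⟩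
    refine ⟨f '' Y, f '' Z, (Set.image_union f Y Z).symm, ?_, hY, hZ⟩
    rw [← Set.image_inter hf, hdisj, Set.image_empty]

theorem strictSat_or_inc_image_toPartial_iff (X : Set (Fin n → M)) (i j k l : Fin n) :
    strictSat (L := L) M (toPartial '' X) (.or (.inc [i] [j]) (.inc [k] [l])) ↔
      ∃ Y Z, Y ∪ Z = X ∧ Y ∩ Z = ∅ ∧ (fun s => s i) '' Y ⊆ (fun s => s j) '' Y ∧
        (fun s => s k) '' Z ⊆ (fun s => s l) '' Z := by
  simp only [strictSat_or_image_iff toPartial_injective, strictSat_inc_image_toPartial_iff]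

end Encoding

theorem not_exists_split_exTeam : ¬ ∃ Y Z : Set (Fin 3 → Fin 3), Y ∪ Z = exTeam ∧ Y ∩ Z = ∅ ∧
    (fun s => s 0) '' Y ⊆ (fun s => s 1) '' Y ∧ (fun s => s 2) '' Z ⊆ (fun s => s 1) '' Z := by
  rintro ⟨Y, Z, hYZ, hdisj, hY, hZ⟩
  have v_values : ∀ W ⊆ exTeam, ∀ a ∈ (fun s => s 1) '' W, a ≠ 2 ∧ (a = 0 → ![1, 0, 1] ∈ W) := by
    rintro W hW _ ⟨s, hs, rfl⟩
    rcases hW hs with rfl | rfl | rfl <;> simp [hs]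
  have hYX : Y ⊆ exTeam := hYZ ▸ Set.subset_union_left
  have hZX : Z ⊆ exTeam := hYZ ▸ Set.subset_union_right
  have mem_Y_or_Z : ∀ s ∈ exTeam, s ∈ Y ∨ s ∈ Z := fun s hs => (hYZ ▸ hs : s ∈ Y ∪ Z)
  have s₂_mem : ![2, 1, 0] ∈ Z := (mem_Y_or_Z _ (by simp [exTeam])).resolve_left fun h =>
    (v_values Y hYX _ (hY ⟨_, h, rfl⟩)).1 rfl
  have s₁_mem : ![1, 0, 1] ∈ Z := (v_values Z hZX _ (hZ ⟨_, s₂_mem, rfl⟩)).2 rfl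
  rcases mem_Y_or_Z ![0, 1, 2] (by simp [exTeam]) with h | h
  · exact hdisj.subset ⟨(v_values Y hYX _ (hY ⟨_, h, rfl⟩)).2 rfl, s₁_mem⟩
  · exact (v_values Z hZX _ (hZ ⟨_, h, rfl⟩)).1 rfl

theorem exists_split_exTeamExt : ∃ Y' Z' : Set (Fin 4 → Fin 3), Y' ∪ Z' = exTeamExt ∧
    Y' ∩ Z' = ∅ ∧ (fun t => t 0) '' Y' ⊆ (fun t => t 1) '' Y' ∧
      (fun t => t 2) '' Z' ⊆ (fun t => t 1) '' Z' := by
  set Z' := {t ∈ exTeamExt | t 0 = 2 ∨ t 0 = 1 ∧ t 3 = 0}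
  refine ⟨exTeamExt \ Z', Z', Set.sdiff_union_of_subset (Set.sep_subset _ _), Set.sdiff_inter_self,
    ?_⟩
  simpa [Z', Set.subset_def, exTeamExt, exTeam, or_and_right, exists_or, or_imp, forall_and]
    using exists_ne (0 : Fin 3)

theorem exTeam'_eq : exTeam' = toPartial '' exTeam := rfl

theorem exTeamExt_eq : exTeamExt = extendTeam exTeam := rfl

/-- The team from the paper separating strict and lax semantics:
(a) `X` admits no disjoint splitting `Y ∪ Z = X` with `{s(u) : s ∈ Y} ⊆ {s(v) : s ∈ Y}`
and `{s(w) : s ∈ Z} ⊆ {s(v) : s ∈ Z}`;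
(b) for `X[M/x]` we have `{s(w)} ⊆ {s(x)}` and such a disjoint splitting exists;
consequently, under strict team semantics (with `u, v, w, x` encoded as the
variables `0, 1, 2, 3` and `M = Fin 3` a structure of the empty language),
`M ⊨_X ∀x(w ⊆ x ∧ (u ⊆ v ∨ w ⊆ v))` but `M ⊭_X u ⊆ v ∨ w ⊆ v`. -/
theorem strict_disjunction_not_local :
    -- (a)
    (¬ ∃ Y Z : Set (Fin 3 → Fin 3), Y ∪ Z = exTeam ∧ Y ∩ Z = ∅ ∧
        (fun s => s 0) '' Y ⊆ (fun s => s 1) '' Y ∧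
        (fun s => s 2) '' Z ⊆ (fun s => s 1) '' Z) ∧
    -- (b)
    ((fun t => t 2) '' exTeamExt ⊆ (fun t => t 3) '' exTeamExt ∧
      ∃ Y' Z' : Set (Fin 4 → Fin 3), Y' ∪ Z' = exTeamExt ∧ Y' ∩ Z' = ∅ ∧
        (fun t => t 0) '' Y' ⊆ (fun t => t 1) '' Y' ∧
        (fun t => t 2) '' Z' ⊆ (fun t => t 1) '' Z') ∧
    -- consequently, under strict team semantics:
    strictSat (Fin 3) exTeam'
      (TF.all 3 (TF.and (TF.inc [2] [3])
        (TF.or (TF.inc [0] [1]) (TF.inc [2] [1]))) : TF FirstOrder.Language.empty) ∧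
    ¬ strictSat (Fin 3) exTeam'
      (TF.or (TF.inc [0] [1]) (TF.inc [2] [1]) : TF FirstOrder.Language.empty) := by
  have w_sub_x : (fun t => t 2) '' exTeamExt ⊆ (fun t => t 3) '' exTeamExt :=
    image_castSucc_subset_image_last_extendTeam exTeam 2
  refine ⟨not_exists_split_exTeam, ⟨w_sub_x, exists_split_exTeamExt⟩, ?_, ?_⟩
  · rw [exTeam'_eq, strictSat_all_image_toPartial_iff, ← exTeamExt_eq]
    exact ⟨(strictSat_inc_image_toPartial_iff _ 2 3).2 w_sub_x,
      (strictSat_or_inc_image_toPartial_iff _ 0 1 2 1).2 exists_split_exTeamExt⟩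
  · rw [exTeam'_eq]
    exact mt (strictSat_or_inc_image_toPartial_iff _ 0 1 2 1).1 not_exists_split_exTeam

end TeamSem
end

section
/- For every sentence ψ ∈ FO(=(…), ⊆)(k∀) (i.e., allowing dependence and inclusion atoms but no independence atoms) there is a sentence τ_ψ ∈ ESO_f(k∀) such that for all structures A with at least two elements: A ⊨ ψ under strict team semantics if and only if A ⊨ τ_ψ. -/
open FirstOrder FirstOrder.Language FirstOrder.Language.Structure

namespace TeamSem

/-- Terms of the language `L` extended with function symbols from `F` (where `f : F`
has arity `ar f`), with first-order variables in `ℕ`. -/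
inductive ETerm (L : FirstOrder.Language.{u, v}) (F : Type) (ar : F → ℕ) :
    Type (max u v) where
  | var : ℕ → ETerm L F ar
  | func : {n : ℕ} → L.Functions n → (Fin n → ETerm L F ar) → ETerm L F ar
  | efunc : (f : F) → (Fin (ar f) → ETerm L F ar) → ETerm L F ar

/-- Quantifier-free first-order formulas over `L` extended with function symbols
from `F`. -/
inductive EQF (L : FirstOrder.Language.{u, v}) (F : Type) (ar : F → ℕ) :
    Type (max u v) where
  | rel : {n : ℕ} → L.Relations n → (Fin n → ETerm L F ar) → EQF L F ar
  | nrel : {n : ℕ} → L.Relations n → (Fin n → ETerm L F ar) → EQF L F ar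
  | teq : ETerm L F ar → ETerm L F ar → EQF L F ar
  | tne : ETerm L F ar → ETerm L F ar → EQF L F ar
  | and : EQF L F ar → EQF L F ar → EQF L F ar
  | or : EQF L F ar → EQF L F ar → EQF L F ar

variable {L : FirstOrder.Language.{u, v}} {F : Type} {ar : F → ℕ}

/-- Realization of an extended term, given interpretations `fi` of the extra
function symbols and an assignment `s` of the variables. -/
def ETerm.realize {M : Type w} [L.Structure M]
    (fi : ∀ f : F, (Fin (ar f) → M) → M) (s : ℕ → M) : ETerm L F ar → M
  | .var n => s n
  | .func g ts => funMap g fun i => (ts i).realize fi s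
  | .efunc f ts => fi f fun i => (ts i).realize fi s

/-- Realization of a quantifier-free extended formula. -/
def EQF.realize {M : Type w} [L.Structure M]
    (fi : ∀ f : F, (Fin (ar f) → M) → M) (s : ℕ → M) : EQF L F ar → Prop
  | .rel R ts => RelMap R fun i => (ts i).realize fi s
  | .nrel R ts => ¬ RelMap R fun i => (ts i).realize fi s
  | .teq t u => t.realize fi s = u.realize fi s
  | .tne t u => t.realize fi s ≠ u.realize fi s
  | .and φ ψ => φ.realize fi s ∧ ψ.realize fi s
  | .or φ ψ => φ.realize fi s ∨ ψ.realize fi s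

/-- All variables occurring in the term are among `x₀, …, x_{r-1}`. -/
def ETerm.varsLT (r : ℕ) : ETerm L F ar → Prop
  | .var n => n < r
  | .func _ ts => ∀ i, (ts i).varsLT r
  | .efunc _ ts => ∀ i, (ts i).varsLT r

/-- All variables occurring in the formula are among `x₀, …, x_{r-1}`. -/
def EQF.varsLT (r : ℕ) : EQF L F ar → Prop
  | .rel _ ts => ∀ i, (ts i).varsLT r
  | .nrel _ ts => ∀ i, (ts i).varsLT r
  | .teq t u => t.varsLT r ∧ u.varsLT r
  | .tne t u => t.varsLT r ∧ u.varsLT r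
  | .and φ ψ => φ.varsLT r ∧ ψ.varsLT r
  | .or φ ψ => φ.varsLT r ∧ ψ.varsLT r

/-- Truth of the `ESO_f` sentence `∃f₁…∃fₙ ∀x₁…∀x_r θ` in `M`: there are
interpretations of the function symbols such that `θ` holds under every assignment
of the universally quantified variables. -/
def esoTrue (M : Type w) [L.Structure M] (θ : EQF L F ar) : Prop :=
  ∃ fi : ∀ f : F, (Fin (ar f) → M) → M, ∀ s : ℕ → M, θ.realize fi s

end TeamSem

/-!
A team is coded by a list `V` of variables, terms `T x` (`x ∈ V`) and a quantifier-free formula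
`δ`, all in the variables `x₀, …, x_{j-1}` and some function symbols: it is the set of
assignments `x ↦ T x (s)` for the points `s` satisfying `δ`. By induction on `ψ` one finds a
quantifier-free `θ` with finitely many fresh function symbols such that the coded team satisfies
`ψ` iff the fresh symbols can be interpreted so that `θ` holds at every point satisfying `δ`.

* `∀ x` codes `x` by the new variable `x_j`; no other case adds a variable.
* `∃ x` codes `x` by a fresh function of the values of `V`: strict semantics picks one witness
  per assignment, and an assignment of the team is determined by these values.
* `φ₁ ∨ φ₂` splits the team by a fresh constant `c` and a fresh function `g` of the values of
  `V` into the parts `g = c` and `g ≠ c`; this is where two elements are needed.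
* `=(x̄, y)` becomes `T y = f (T x̄)` for a fresh `f`.
* `x̄ ⊆ ȳ` asks for a witness point for every point; it is Skolemized by replacing
  `x₀, …, x_{j-1}` with fresh `j`-ary functions of them.
-/

namespace TeamSem

open Function

universe u v w

variable {L : FirstOrder.Language.{u, v}} {M : Type w} [L.Structure M]

theorem exists_comp_iff_of_factorsThrough {α β κ γ : Type*} [Nonempty γ] {e : α → β}
    {k : α → κ} (hek : e.FactorsThrough k) (hke : k.FactorsThrough e) (P : (α → γ) → Prop) :
    (∃ G : β → γ, P (G ∘ e)) ↔ ∃ g : κ → γ, P (g ∘ k) := by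
  constructor
  · rintro ⟨G, hG⟩
    have hG' : (G ∘ e).FactorsThrough k := fun _ _ h => congrArg G (hek h)
    exact ⟨_, (hG'.extend_comp fun _ => Classical.arbitrary γ) ▸ hG⟩
  · rintro ⟨g, hg⟩
    have hg' : (g ∘ k).FactorsThrough e := fun _ _ h => congrArg g (hke h)
    exact ⟨_, (hg'.extend_comp fun _ => Classical.arbitrary γ) ▸ hg⟩

theorem factorsThrough_on_iff {α κ γ : Type*} [Nonempty γ] (D : Set α) (k : α → κ)
    (l : α → γ) :
    (∀ a ∈ D, ∀ b ∈ D, k a = k b → l a = l b) ↔ ∃ g : κ → γ, ∀ a ∈ D, l a = g (k a) := by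
  simpa [FactorsThrough, funext_iff, Set.domRestrict_apply] using
    factorsThrough_iff (f := D.domRestrict k) (D.domRestrict l)

theorem exists_split_iff {β γ : Type*} [Nontrivial γ] (X : Set β) (P Q : Set β → Prop) :
    (∃ Y Z, Y ∪ Z = X ∧ Y ∩ Z = ∅ ∧ P Y ∧ Q Z) ↔
      ∃ (c : γ) (G : β → γ), P {b ∈ X | G b = c} ∧ Q {b ∈ X | G b ≠ c} := by
  classical
  constructor
  · rintro ⟨Y, Z, rfl, hYZ, hY, hZ⟩
    obtain ⟨c₁, c₂, hc⟩ := exists_pair_ne γ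
    refine ⟨c₁, fun b => if b ∈ Y then c₁ else c₂, ?_, ?_⟩
    · convert hY using 1
      ext b
      by_cases hb : b ∈ Y <;> simp [hb, hc.symm]
    · convert hZ using 1
      ext b
      have : b ∈ Z → b ∉ Y := fun hbZ hbY => (Set.eq_empty_iff_forall_notMem.1 hYZ) b ⟨hbY, hbZ⟩
      by_cases hb : b ∈ Y <;> simp [hb, hc.symm]
      tauto
  · rintro ⟨c, G, hY, hZ⟩
    refine ⟨_, _, ?_, ?_, hY, hZ⟩ <;> ext b
    · simp only [Set.mem_union, Set.mem_sep_iff]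
      tauto
    · simp +contextual

theorem exists_split_image_iff {α β γ : Type*} [Nontrivial γ] (e : α → β) (D : Set α)
    (P Q : Set β → Prop) :
    (∃ Y Z, Y ∪ Z = e '' D ∧ Y ∩ Z = ∅ ∧ P Y ∧ Q Z) ↔
      ∃ (c : γ) (G : β → γ), P (e '' {a ∈ D | G (e a) = c}) ∧ Q (e '' {a ∈ D | G (e a) ≠ c}) := by
  have sep_image (p : β → Prop) : {b ∈ e '' D | p b} = e '' {a ∈ D | p (e a)} := by
    ext b
    simp only [Set.mem_sep_iff, Set.mem_image]
    constructor
    · rintro ⟨⟨a, ha, rfl⟩, hp⟩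
      exact ⟨a, ⟨ha, hp⟩, rfl⟩
    · rintro ⟨a, ⟨ha, hp⟩, rfl⟩
      exact ⟨⟨a, ha, rfl⟩, hp⟩
  rw [exists_split_iff (γ := γ)]
  simp only [sep_image]

def skolemPoint {γ : Type*} {j : ℕ} (g : Fin j → (Fin j → γ) → γ) (s : ℕ → γ) : ℕ → γ :=
  fun n => if h : n < j then g ⟨n, h⟩ fun i => s i else s n

theorem forall_exists_iff_exists_skolem {γ : Type*} [Nonempty γ] {j : ℕ}
    {P : (ℕ → γ) → Prop} {Q : (ℕ → γ) → (ℕ → γ) → Prop}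
    (hP : ∀ s t, (∀ n < j, s n = t n) → P s → P t)
    (hQ : ∀ s t s' t', (∀ n < j, s n = t n) → (∀ n < j, s' n = t' n) → Q s s' → Q t t') :
    (∀ s, P s → ∃ s', Q s s') ↔
      ∃ g : Fin j → (Fin j → γ) → γ, ∀ s, P s → Q s (skolemPoint g s) := by
  refine ⟨fun h => ?_, fun ⟨g, hg⟩ s hs => ⟨_, hg s hs⟩⟩
  have h' s : ∃ s', P s → Q s s' := by
    by_cases hs : P s
    · exact (h s hs).imp fun _ hQ _ => hQ
    · exact ⟨s, fun h => absurd h hs⟩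
  choose S hS using h'
  let extend (w : Fin j → γ) (n : ℕ) : γ :=
    if h : n < j then w ⟨n, h⟩ else Classical.arbitrary γ
  have extend_lt (s : ℕ → γ) : ∀ n < j, extend (fun i => s i) n = s n := by
    intro n hn
    simp [extend, hn]
  refine ⟨fun k w => S (extend w) k, fun s hs => hQ _ _ _ _ (extend_lt s) ?_
    (hS _ (hP _ _ (fun n hn => (extend_lt s n hn).symm) hs))⟩
  intro n hn
  simp [skolemPoint, hn]

section QuantifierFree

variable {F F₀ F₁ F₂ : Type} {ar : F → ℕ} {ar₀ : F₀ → ℕ} {ar₁ : F₁ → ℕ} {ar₂ : F₂ → ℕ}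

abbrev Interp (F : Type) (ar : F → ℕ) (M : Type w) := ∀ f : F, (Fin (ar f) → M) → M

def sumInterp (fi₀ : Interp F₀ ar₀ M) (fi₁ : Interp F₁ ar₁ M) :
    Interp (F₀ ⊕ F₁) (Sum.elim ar₀ ar₁) M
  | .inl f => fi₀ f
  | .inr f => fi₁ f

theorem sumInterp_eta (fi : Interp (F₀ ⊕ F₁) (Sum.elim ar₀ ar₁) M) :
    sumInterp (fun f => fi (.inl f)) (fun f => fi (.inr f)) = fi := by
  funext f
  cases f <;> rfl

theorem exists_sumInterp_iff {P : Interp (F₀ ⊕ F₁) (Sum.elim ar₀ ar₁) M → Prop} :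
    (∃ fi, P fi) ↔ ∃ fi₀ fi₁, P (sumInterp fi₀ fi₁) :=
  ⟨fun ⟨fi, h⟩ => ⟨_, _, (sumInterp_eta fi).symm ▸ h⟩, fun ⟨_, _, h⟩ => ⟨_, h⟩⟩

def ETerm.mapF (h : F₁ → F₂) (hc : ∀ f, ar₂ (h f) = ar₁ f) : ETerm L F₁ ar₁ → ETerm L F₂ ar₂
  | .var n => .var n
  | .func g ts => .func g fun i => (ts i).mapF h hc
  | .efunc f ts => .efunc (h f) fun i => (ts (Fin.cast (hc f) i)).mapF h hc

def EQF.mapF (h : F₁ → F₂) (hc : ∀ f, ar₂ (h f) = ar₁ f) : EQF L F₁ ar₁ → EQF L F₂ ar₂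
  | .rel R ts => .rel R fun i => (ts i).mapF h hc
  | .nrel R ts => .nrel R fun i => (ts i).mapF h hc
  | .teq t u => .teq (t.mapF h hc) (u.mapF h hc)
  | .tne t u => .tne (t.mapF h hc) (u.mapF h hc)
  | .and φ ψ => .and (φ.mapF h hc) (ψ.mapF h hc)
  | .or φ ψ => .or (φ.mapF h hc) (ψ.mapF h hc)

def pullInterp (h : F₁ → F₂) (hc : ∀ f, ar₂ (h f) = ar₁ f) (fi : Interp F₂ ar₂ M) :
    Interp F₁ ar₁ M :=
  fun f w => fi (h f) fun i => w (Fin.cast (hc f) i)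

theorem ETerm.realize_mapF (h : F₁ → F₂) (hc : ∀ f, ar₂ (h f) = ar₁ f)
    (fi : Interp F₂ ar₂ M) (s : ℕ → M) :
    ∀ t : ETerm L F₁ ar₁, (t.mapF h hc).realize fi s = t.realize (pullInterp h hc fi) s
  | .var _ => rfl
  | .func g ts => congrArg (funMap g) (funext fun i => realize_mapF h hc fi s (ts i))
  | .efunc f _ => congrArg (fi (h f)) (funext fun _ => realize_mapF h hc fi s _)

theorem EQF.realize_mapF (h : F₁ → F₂) (hc : ∀ f, ar₂ (h f) = ar₁ f)
    (fi : Interp F₂ ar₂ M) (s : ℕ → M) :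
    ∀ θ : EQF L F₁ ar₁, (θ.mapF h hc).realize fi s ↔ θ.realize (pullInterp h hc fi) s
  | .rel R ts | .nrel R ts => by simp only [EQF.mapF, EQF.realize, ETerm.realize_mapF]
  | .teq t u | .tne t u => by simp only [EQF.mapF, EQF.realize, ETerm.realize_mapF]
  | .and φ ψ => and_congr (realize_mapF h hc fi s φ) (realize_mapF h hc fi s ψ)
  | .or φ ψ => or_congr (realize_mapF h hc fi s φ) (realize_mapF h hc fi s ψ)

theorem pullInterp_equiv {F F' : Type} {ar : F → ℕ} (e : F ≃ F') (fi : Interp F ar M) :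
    pullInterp (ar₂ := ar ∘ e.symm) e (fun f => by simp) (fun f' => fi (e.symm f')) = fi := by
  funext f w
  suffices ∀ f' (_ : f' = f) (hc : ar f' = ar f), fi f' (fun i => w (Fin.cast hc i)) = fi f w from
    this _ (e.symm_apply_apply f) _
  rintro _ rfl _
  rfl

def EQF.mapEquiv {F F' : Type} {ar : F → ℕ} (e : F ≃ F') (θ : EQF L F ar) :
    EQF L F' (ar ∘ e.symm) :=
  θ.mapF e fun f => by simp

theorem esoTrue_mapEquiv {F F' : Type} {ar : F → ℕ} (e : F ≃ F') (θ : EQF L F ar) :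
    esoTrue M (θ.mapEquiv e) ↔ esoTrue M θ := by
  simp only [esoTrue, EQF.mapEquiv, EQF.realize_mapF]
  exact ⟨fun ⟨_, h⟩ => ⟨_, h⟩,
    fun ⟨fi, h⟩ => ⟨fun f' => fi (e.symm f'), (pullInterp_equiv e fi).symm ▸ h⟩⟩

theorem ETerm.varsLT_mapF (h : F₁ → F₂) (hc : ∀ f, ar₂ (h f) = ar₁ f) {j : ℕ} :
    ∀ t : ETerm L F₁ ar₁, t.varsLT j → (t.mapF h hc).varsLT j
  | .var _, ht => ht
  | .func _ ts, ht => fun i => varsLT_mapF h hc (ts i) (ht i)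
  | .efunc _ _, ht => fun _ => varsLT_mapF h hc _ (ht _)

theorem EQF.varsLT_mapF (h : F₁ → F₂) (hc : ∀ f, ar₂ (h f) = ar₁ f) {j : ℕ} :
    ∀ θ : EQF L F₁ ar₁, θ.varsLT j → (θ.mapF h hc).varsLT j
  | .rel _ ts, ht | .nrel _ ts, ht => fun i => (ts i).varsLT_mapF h hc (ht i)
  | .teq t u, ht | .tne t u, ht => ⟨t.varsLT_mapF h hc ht.1, u.varsLT_mapF h hc ht.2⟩
  | .and φ ψ, ht | .or φ ψ, ht => ⟨φ.varsLT_mapF h hc ht.1, ψ.varsLT_mapF h hc ht.2⟩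

theorem ETerm.varsLT_mono {j j' : ℕ} (hj : j ≤ j') :
    ∀ t : ETerm L F ar, t.varsLT j → t.varsLT j'
  | .var _, ht => lt_of_lt_of_le ht hj
  | .func _ ts, ht | .efunc _ ts, ht => fun i => varsLT_mono hj (ts i) (ht i)

theorem EQF.varsLT_mono {j j' : ℕ} (hj : j ≤ j') :
    ∀ θ : EQF L F ar, θ.varsLT j → θ.varsLT j'
  | .rel _ ts, ht | .nrel _ ts, ht => fun i => (ts i).varsLT_mono hj (ht i)
  | .teq t u, ht | .tne t u, ht => ⟨t.varsLT_mono hj ht.1, u.varsLT_mono hj ht.2⟩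
  | .and φ ψ, ht | .or φ ψ, ht => ⟨φ.varsLT_mono hj ht.1, ψ.varsLT_mono hj ht.2⟩

abbrev ETerm.inlF (t : ETerm L F₀ ar₀) : ETerm L (F₀ ⊕ F₁) (Sum.elim ar₀ ar₁) :=
  t.mapF Sum.inl fun _ => rfl

abbrev EQF.inlF (θ : EQF L F₀ ar₀) : EQF L (F₀ ⊕ F₁) (Sum.elim ar₀ ar₁) :=
  θ.mapF Sum.inl fun _ => rfl

@[simp]
theorem ETerm.realize_inlF (fi₀ : Interp F₀ ar₀ M) (fi₁ : Interp F₁ ar₁ M) (s : ℕ → M)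
    (t : ETerm L F₀ ar₀) : (t.inlF (ar₁ := ar₁)).realize (sumInterp fi₀ fi₁) s = t.realize fi₀ s :=
  t.realize_mapF _ _ _ s

@[simp]
theorem EQF.realize_inlF (fi₀ : Interp F₀ ar₀ M) (fi₁ : Interp F₁ ar₁ M) (s : ℕ → M)
    (θ : EQF L F₀ ar₀) : (θ.inlF (ar₁ := ar₁)).realize (sumInterp fi₀ fi₁) s ↔ θ.realize fi₀ s :=
  θ.realize_mapF _ _ _ s

def EQF.not : EQF L F ar → EQF L F ar
  | .rel R ts => .nrel R ts
  | .nrel R ts => .rel R ts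
  | .teq t u => .tne t u
  | .tne t u => .teq t u
  | .and φ ψ => .or φ.not ψ.not
  | .or φ ψ => .and φ.not ψ.not

@[simp]
theorem EQF.realize_not (fi : Interp F ar M) (s : ℕ → M) :
    ∀ θ : EQF L F ar, θ.not.realize fi s ↔ ¬ θ.realize fi s
  | .rel _ _ | .teq _ _ => Iff.rfl
  | .nrel _ _ | .tne _ _ => not_not.symm
  | .and φ ψ => by
      simp only [EQF.not, EQF.realize, realize_not fi s φ, realize_not fi s ψ, not_and_or]
  | .or φ ψ => by simp only [EQF.not, EQF.realize, realize_not fi s φ, realize_not fi s ψ, not_or]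

theorem EQF.varsLT_not {j : ℕ} : ∀ θ : EQF L F ar, θ.varsLT j → θ.not.varsLT j
  | .rel _ _, ht | .nrel _ _, ht | .teq _ _, ht | .tne _ _, ht => ht
  | .and φ ψ, ht | .or φ ψ, ht => ⟨φ.varsLT_not ht.1, ψ.varsLT_not ht.2⟩

def ETerm.vsub (σ : ℕ → ETerm L F ar) : ETerm L F ar → ETerm L F ar
  | .var n => σ n
  | .func g ts => .func g fun i => (ts i).vsub σ
  | .efunc f ts => .efunc f fun i => (ts i).vsub σ

def EQF.vsub (σ : ℕ → ETerm L F ar) : EQF L F ar → EQF L F ar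
  | .rel R ts => .rel R fun i => (ts i).vsub σ
  | .nrel R ts => .nrel R fun i => (ts i).vsub σ
  | .teq t u => .teq (t.vsub σ) (u.vsub σ)
  | .tne t u => .tne (t.vsub σ) (u.vsub σ)
  | .and φ ψ => .and (φ.vsub σ) (ψ.vsub σ)
  | .or φ ψ => .or (φ.vsub σ) (ψ.vsub σ)

theorem ETerm.realize_vsub (fi : Interp F ar M) (s : ℕ → M) (σ : ℕ → ETerm L F ar) :
    ∀ t : ETerm L F ar, (t.vsub σ).realize fi s = t.realize fi fun n => (σ n).realize fi s
  | .var _ => rfl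
  | .func g ts => congrArg (funMap g) (funext fun i => realize_vsub fi s σ (ts i))
  | .efunc f ts => congrArg (fi f) (funext fun i => realize_vsub fi s σ (ts i))

theorem EQF.realize_vsub (fi : Interp F ar M) (s : ℕ → M) (σ : ℕ → ETerm L F ar) :
    ∀ θ : EQF L F ar, (θ.vsub σ).realize fi s ↔ θ.realize fi fun n => (σ n).realize fi s
  | .rel _ _ | .nrel _ _ | .teq _ _ | .tne _ _ => by
      simp only [EQF.vsub, EQF.realize, ETerm.realize_vsub]
  | .and φ ψ => and_congr (realize_vsub fi s σ φ) (realize_vsub fi s σ ψ)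
  | .or φ ψ => or_congr (realize_vsub fi s σ φ) (realize_vsub fi s σ ψ)

theorem ETerm.varsLT_vsub {σ : ℕ → ETerm L F ar} {j j' : ℕ} (hσ : ∀ n < j, (σ n).varsLT j') :
    ∀ t : ETerm L F ar, t.varsLT j → (t.vsub σ).varsLT j'
  | .var n, ht => hσ n ht
  | .func _ ts, ht | .efunc _ ts, ht => fun i => varsLT_vsub hσ (ts i) (ht i)

theorem EQF.varsLT_vsub {σ : ℕ → ETerm L F ar} {j j' : ℕ} (hσ : ∀ n < j, (σ n).varsLT j') :
    ∀ θ : EQF L F ar, θ.varsLT j → (θ.vsub σ).varsLT j'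
  | .rel _ ts, ht | .nrel _ ts, ht => fun i => (ts i).varsLT_vsub hσ (ht i)
  | .teq t u, ht | .tne t u, ht => ⟨t.varsLT_vsub hσ ht.1, u.varsLT_vsub hσ ht.2⟩
  | .and φ ψ, ht | .or φ ψ, ht => ⟨φ.varsLT_vsub hσ ht.1, ψ.varsLT_vsub hσ ht.2⟩

theorem ETerm.realize_congr_lt (fi : Interp F ar M) {s s' : ℕ → M} {j : ℕ}
    (hs : ∀ n < j, s n = s' n) :
    ∀ t : ETerm L F ar, t.varsLT j → t.realize fi s = t.realize fi s'
  | .var n, ht => hs n ht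
  | .func g ts, ht => congrArg (funMap g) (funext fun i => realize_congr_lt fi hs (ts i) (ht i))
  | .efunc f ts, ht => congrArg (fi f) (funext fun i => realize_congr_lt fi hs (ts i) (ht i))

theorem EQF.realize_congr_lt (fi : Interp F ar M) {s s' : ℕ → M} {j : ℕ}
    (hs : ∀ n < j, s n = s' n) :
    ∀ θ : EQF L F ar, θ.varsLT j → (θ.realize fi s ↔ θ.realize fi s')
  | .rel _ ts, ht | .nrel _ ts, ht => by
      simp only [EQF.realize, funext fun i => (ts i).realize_congr_lt fi hs (ht i)]
  | .teq t u, ht | .tne t u, ht => by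
      simp only [EQF.realize, t.realize_congr_lt fi hs ht.1, u.realize_congr_lt fi hs ht.2]
  | .and φ ψ, ht => and_congr (φ.realize_congr_lt fi hs ht.1) (ψ.realize_congr_lt fi hs ht.2)
  | .or φ ψ, ht => or_congr (φ.realize_congr_lt fi hs ht.1) (ψ.realize_congr_lt fi hs ht.2)

def EQF.andEqs : EQF L F ar → List (ETerm L F ar) → List (ETerm L F ar) → EQF L F ar
  | b, [], [] => b
  | b, t :: ts, u :: us => .and (.teq t u) (b.andEqs ts us)
  | b, _, _ => .and b b.not

theorem EQF.realize_andEqs (fi : Interp F ar M) (s : ℕ → M) :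
    ∀ (b : EQF L F ar) (ts us : List (ETerm L F ar)), (b.andEqs ts us).realize fi s ↔
      b.realize fi s ∧ ts.map (·.realize fi s) = us.map (·.realize fi s)
  | b, [], [] => by simp [andEqs]
  | b, t :: ts, u :: us => by
      simp only [andEqs, EQF.realize, realize_andEqs fi s b ts us, List.map_cons, List.cons.injEq]
      tauto
  | b, [], _ :: _ | b, _ :: _, [] => by simp [andEqs, EQF.realize]

theorem EQF.varsLT_andEqs {j : ℕ} :
    ∀ (b : EQF L F ar) (ts us : List (ETerm L F ar)), b.varsLT j → (∀ t ∈ ts, t.varsLT j) →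
      (∀ u ∈ us, u.varsLT j) → (b.andEqs ts us).varsLT j
  | _, [], [], hb, _, _ => hb
  | b, t :: ts, u :: us, hb, hts, hus =>
      ⟨⟨hts t List.mem_cons_self, hus u List.mem_cons_self⟩,
        varsLT_andEqs b ts us hb (fun t' h => hts t' (List.mem_cons_of_mem _ h))
          fun u' h => hus u' (List.mem_cons_of_mem _ h)⟩
  | b, [], _ :: _, hb, _, _ | b, _ :: _, [], hb, _, _ => ⟨hb, b.varsLT_not hb⟩

def tsubst (T : ℕ → ETerm L F ar) : L.Term ℕ → ETerm L F ar
  | .var n => T n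
  | .func g ts => .func g fun i => tsubst T (ts i)

theorem varsLT_tsubst {T : ℕ → ETerm L F ar} {j : ℕ} {V : List ℕ}
    (hT : ∀ x ∈ V, (T x).varsLT j) :
    ∀ t : L.Term ℕ, (∀ x ∈ tvars t, x ∈ V) → (tsubst T t).varsLT j
  | .var n, ht => hT n (ht n rfl)
  | .func _ ts, ht => fun i =>
      varsLT_tsubst hT (ts i) fun x hx => ht x (Set.mem_iUnion.2 ⟨i, hx⟩)

end QuantifierFree

section CodedTeam

variable {F F₀ F₁ : Type} {ar : F → ℕ} {ar₀ : F₀ → ℕ} {ar₁ : F₁ → ℕ}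
  (V : List ℕ) (T : ℕ → ETerm L F ar) (fi : Interp F ar M)

def codedAssign (s : ℕ → M) : ℕ → Option M :=
  fun x => if x ∈ V then some ((T x).realize fi s) else none

def valTuple (s : ℕ → M) : Fin V.length → M :=
  fun i => (T V[i]).realize fi s

def codedTeam (δ : EQF L F ar) : Set (ℕ → Option M) :=
  codedAssign V T fi '' {s | δ.realize fi s}

variable {V T fi}

theorem codedAssign_of_mem {s : ℕ → M} {x : ℕ} (hx : x ∈ V) :
    codedAssign V T fi s x = some ((T x).realize fi s) :=
  if_pos hx

theorem codedAssign_eq_iff {s s' : ℕ → M} :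
    codedAssign V T fi s = codedAssign V T fi s' ↔ valTuple V T fi s = valTuple V T fi s' := by
  constructor
  · intro h
    funext i
    simpa [valTuple, codedAssign_of_mem (List.getElem_mem i.2)] using congrFun h V[i]
  · intro h
    funext x
    by_cases hx : x ∈ V
    · obtain ⟨i, hi, rfl⟩ := List.getElem_of_mem hx
      simpa [valTuple, codedAssign_of_mem hx] using congrFun h ⟨i, hi⟩
    · simp [codedAssign, hx]

theorem oreal_codedAssign (s : ℕ → M) :
    ∀ t : L.Term ℕ, (∀ x ∈ tvars t, x ∈ V) →
      oreal (codedAssign V T fi s) t = some ((tsubst T t).realize fi s)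
  | .var n, ht => codedAssign_of_mem (ht n rfl)
  | .func g ts, ht => by
      have ih i : oreal (codedAssign V T fi s) (ts i) = some ((tsubst T (ts i)).realize fi s) :=
        oreal_codedAssign s (ts i) fun x hx => ht x (Set.mem_iUnion.2 ⟨i, hx⟩)
      simp [oreal, ih, tsubst, ETerm.realize]

theorem map_codedAssign {s : ℕ → M} {xs : List ℕ} (hxs : ∀ x ∈ xs, x ∈ V) :
    xs.map (codedAssign V T fi s) = (xs.map fun x => (T x).realize fi s).map some := by
  rw [List.map_map]
  exact List.map_congr_left fun x hx => codedAssign_of_mem (hxs x hx)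

theorem codedAssign_cons_update (x : ℕ) (t : ETerm L F ar) (s : ℕ → M) :
    codedAssign (x :: V) (update T x t) fi s =
      update (codedAssign V T fi s) x (some (t.realize fi s)) := by
  funext y
  by_cases hy : y = x
  · subst hy
    simp [codedAssign]
  · simp [codedAssign, hy]

theorem codedAssign_inlF {T : ℕ → ETerm L F₀ ar₀} (fi₀ : Interp F₀ ar₀ M)
    (fi₁ : Interp F₁ ar₁ M) (s : ℕ → M) :
    codedAssign V (fun x => (T x).inlF) (sumInterp fi₀ fi₁) s = codedAssign V T fi₀ s := by
  unfold codedAssign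
  simp only [ETerm.realize_inlF]

theorem codedAssign_congr_lt {j : ℕ} (hT : ∀ x ∈ V, (T x).varsLT j) {s s' : ℕ → M}
    (hs : ∀ n < j, s n = s' n) : codedAssign V T fi s = codedAssign V T fi s' := by
  funext x
  by_cases hx : x ∈ V
  · simp [codedAssign_of_mem hx, (T x).realize_congr_lt fi hs (hT x hx)]
  · simp [codedAssign, hx]

theorem codedTeam_inlF_and {T : ℕ → ETerm L F₀ ar₀} {δ : EQF L F₀ ar₀}
    (fi₀ : Interp F₀ ar₀ M) (fi₁ : Interp F₁ ar₁ M) (χ : EQF L (F₀ ⊕ F₁) (Sum.elim ar₀ ar₁)) :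
    codedTeam V (fun x => (T x).inlF) (sumInterp fi₀ fi₁) (δ.inlF.and χ) =
      codedAssign V T fi₀ '' {s | δ.realize fi₀ s ∧ χ.realize (sumInterp fi₀ fi₁) s} := by
  simp only [codedTeam, EQF.realize, EQF.realize_inlF, codedAssign_inlF]

variable (T fi) in
theorem codedTeam_nil [Nonempty M] {δ : EQF L F ar} (hδ : ∀ s, δ.realize fi s) :
    codedTeam [] T fi δ = {emptyAssign M} := by
  have : codedAssign [] T fi = fun _ => emptyAssign M := by
    funext s x
    simp [codedAssign, emptyAssign]
  rw [codedTeam, this, Set.Nonempty.image_const ⟨fun _ => Classical.arbitrary M, hδ _⟩]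

end CodedTeam

section StrictSatCoded

variable {F : Type} {ar : F → ℕ} {V : List ℕ} {T : ℕ → ETerm L F ar} {fi : Interp F ar M}
  {δ : EQF L F ar}

theorem strictSat_codedTeam_rel {n : ℕ} (R : L.Relations n) (ts : Fin n → L.Term ℕ)
    (hV : freeVars (.rel R ts : TF L) ⊆ {x | x ∈ V}) :
    strictSat M (codedTeam V T fi δ) (.rel R ts) ↔
      ∀ s, δ.realize fi s → (EQF.rel R fun i => tsubst T (ts i)).realize fi s := by
  have hts s i := oreal_codedAssign (T := T) (fi := fi) s (ts i)
    fun x hx => hV (Set.mem_iUnion.2 ⟨i, hx⟩)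
  simp only [strictSat, codedTeam, Set.forall_mem_image, hts, Option.some.injEq]
  simp [EQF.realize, ← funext_iff]

theorem strictSat_codedTeam_nrel {n : ℕ} (R : L.Relations n) (ts : Fin n → L.Term ℕ)
    (hV : freeVars (.nrel R ts : TF L) ⊆ {x | x ∈ V}) :
    strictSat M (codedTeam V T fi δ) (.nrel R ts) ↔
      ∀ s, δ.realize fi s → (EQF.nrel R fun i => tsubst T (ts i)).realize fi s := by
  have hts s i := oreal_codedAssign (T := T) (fi := fi) s (ts i)
    fun x hx => hV (Set.mem_iUnion.2 ⟨i, hx⟩)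
  simp only [strictSat, codedTeam, Set.forall_mem_image, hts, Option.some.injEq]
  simp [EQF.realize, ← funext_iff]

theorem strictSat_codedTeam_teq (t u : L.Term ℕ) (hV : freeVars (.teq t u : TF L) ⊆ {x | x ∈ V}) :
    strictSat M (codedTeam V T fi δ) (.teq t u) ↔
      ∀ s, δ.realize fi s → (EQF.teq (tsubst T t) (tsubst T u)).realize fi s := by
  simp only [strictSat, codedTeam, Set.forall_mem_image, EQF.realize,
    oreal_codedAssign _ t fun x hx => hV (Or.inl hx),
    oreal_codedAssign _ u fun x hx => hV (Or.inr hx), Option.some.injEq]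
  simp [eq_comm]

theorem strictSat_codedTeam_tne (t u : L.Term ℕ) (hV : freeVars (.tne t u : TF L) ⊆ {x | x ∈ V}) :
    strictSat M (codedTeam V T fi δ) (.tne t u) ↔
      ∀ s, δ.realize fi s → (EQF.tne (tsubst T t) (tsubst T u)).realize fi s := by
  simp [strictSat, codedTeam, EQF.realize, oreal_codedAssign _ t fun x hx => hV (Or.inl hx),
    oreal_codedAssign _ u fun x hx => hV (Or.inr hx)]

theorem strictSat_codedTeam_dep [Nonempty M] (xs : List ℕ) (y : ℕ)
    (hV : freeVars (.dep xs y : TF L) ⊆ {x | x ∈ V}) :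
    strictSat M (codedTeam V T fi δ) (.dep xs y : TF L) ↔ ∃ g : (Fin xs.length → M) → M,
      ∀ s, δ.realize fi s → (T y).realize fi s = g fun i => (T xs[i]).realize fi s := by
  have hxs : ∀ x ∈ xs, x ∈ V := fun x hx => hV (Or.inl hx)
  refine Iff.trans ?_ (factorsThrough_on_iff {s | δ.realize fi s}
    (fun s i => (T xs[i]).realize fi s) fun s => (T y).realize fi s)
  simp only [strictSat, codedTeam, Set.forall_mem_image, Set.mem_ofPred_eq,
    map_codedAssign (T := T) (fi := fi) hxs,
    (List.map_injective_iff.2 (Option.some_injective M)).eq_iff,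
    codedAssign_of_mem (T := T) (fi := fi) (hV (Or.inr rfl) : y ∈ V), Option.some.injEq]
  simp only [← List.ofFn_getElem_eq_map, List.ofFn_inj]
  rfl

theorem strictSat_codedTeam_inc (xs ys : List ℕ)
    (hV : freeVars (.inc xs ys : TF L) ⊆ {x | x ∈ V}) :
    strictSat M (codedTeam V T fi δ) (.inc xs ys : TF L) ↔ ∀ s, δ.realize fi s → ∃ s',
      δ.realize fi s' ∧
        xs.map (fun x => (T x).realize fi s) = ys.map fun y => (T y).realize fi s' := by
  simp only [strictSat, codedTeam, Set.forall_mem_image, Set.exists_mem_image, Set.mem_ofPred_eq,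
    map_codedAssign (T := T) (fi := fi) fun x hx => hV (List.mem_append_left ys hx),
    map_codedAssign (T := T) (fi := fi) fun x hx => hV (List.mem_append_right xs hx),
    (List.map_injective_iff.2 (Option.some_injective M)).eq_iff]

theorem strictSat_codedTeam_or [Nontrivial M] (φ₁ φ₂ : TF L) :
    strictSat M (codedTeam V T fi δ) (.or φ₁ φ₂) ↔ ∃ (c : M) (g : (Fin V.length → M) → M),
      strictSat M (codedAssign V T fi '' {s | δ.realize fi s ∧ g (valTuple V T fi s) = c}) φ₁ ∧
      strictSat M (codedAssign V T fi '' {s | δ.realize fi s ∧ g (valTuple V T fi s) ≠ c}) φ₂ := by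
  rw [strictSat, codedTeam, exists_split_image_iff (γ := M)]
  exact exists_congr fun c => exists_comp_iff_of_factorsThrough
    (fun _ _ h => codedAssign_eq_iff.2 h) (fun _ _ h => codedAssign_eq_iff.1 h)
    fun g => strictSat M (codedAssign V T fi '' {s | δ.realize fi s ∧ g s = c}) φ₁ ∧
      strictSat M (codedAssign V T fi '' {s | δ.realize fi s ∧ g s ≠ c}) φ₂

theorem strictSat_codedTeam_ex [Nonempty M] (x : ℕ) (φ : TF L) :
    strictSat M (codedTeam V T fi δ) (.ex x φ) ↔ ∃ g : (Fin V.length → M) → M,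
      strictSat M ((fun s => update (codedAssign V T fi s) x (some (g (valTuple V T fi s)))) ''
        {s | δ.realize fi s}) φ := by
  rw [strictSat, codedTeam]
  simp only [Set.image_image]
  exact exists_comp_iff_of_factorsThrough
    (fun _ _ h => codedAssign_eq_iff.2 h) (fun _ _ h => codedAssign_eq_iff.1 h)
    fun g => strictSat M ((fun s => update (codedAssign V T fi s) x (some (g s))) ''
      {s | δ.realize fi s}) φ

theorem strictSat_codedTeam_all {j : ℕ} (hT : ∀ x ∈ V, (T x).varsLT j) (hδ : δ.varsLT j)
    (x : ℕ) (φ : TF L) :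
    strictSat M (codedTeam V T fi δ) (.all x φ) ↔
      strictSat M (codedTeam (x :: V) (update T x (.var j)) fi δ) φ := by
  have below_j (m : M) (s : ℕ → M) : ∀ n < j, s n = update s j m n :=
    fun n hn => (update_of_ne hn.ne m s).symm
  rw [strictSat]
  congr! 1
  ext t
  simp only [codedTeam, Set.mem_image, Set.mem_ofPred_eq, codedAssign_cons_update]
  constructor
  · rintro ⟨_, ⟨s, hs, rfl⟩, m, rfl⟩
    refine ⟨update s j m, (δ.realize_congr_lt fi (below_j m s) hδ).1 hs, ?_⟩
    rw [codedAssign_congr_lt hT (below_j m s)]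
    simp [ETerm.realize]
  · rintro ⟨s, hs, rfl⟩
    exact ⟨_, ⟨s, hs, rfl⟩, s j, rfl⟩

end StrictSatCoded

section Defines

variable {F₀ F₁ F₂ S : Type} {ar₀ : F₀ → ℕ} {ar₁ : F₁ → ℕ} {ar₂ : F₂ → ℕ} {arS : S → ℕ}

def Defines (M : Type w) [L.Structure M] (δ : EQF L F₀ ar₀)
    (θ : EQF L (F₀ ⊕ F₁) (Sum.elim ar₀ ar₁)) (P : Interp F₀ ar₀ M → Prop) : Prop :=
  ∀ fi₀, P fi₀ ↔ ∃ fi₁ : Interp F₁ ar₁ M, ∀ s, δ.realize fi₀ s → θ.realize (sumInterp fi₀ fi₁) s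

def EQF.liftLeft (θ : EQF L (F₀ ⊕ F₁) (Sum.elim ar₀ ar₁)) :
    EQF L (F₀ ⊕ (F₁ ⊕ F₂)) (Sum.elim ar₀ (Sum.elim ar₁ ar₂)) :=
  θ.mapF (Sum.map id Sum.inl) (by rintro (f | f) <;> rfl)

def EQF.liftRight (θ : EQF L (F₀ ⊕ F₂) (Sum.elim ar₀ ar₂)) :
    EQF L (F₀ ⊕ (F₁ ⊕ F₂)) (Sum.elim ar₀ (Sum.elim ar₁ ar₂)) :=
  θ.mapF (Sum.map id Sum.inr) (by rintro (f | f) <;> rfl)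

def EQF.assocF (θ : EQF L ((F₀ ⊕ S) ⊕ F₁) (Sum.elim (Sum.elim ar₀ arS) ar₁)) :
    EQF L (F₀ ⊕ (S ⊕ F₁)) (Sum.elim ar₀ (Sum.elim arS ar₁)) :=
  θ.mapF (Equiv.sumAssoc F₀ S F₁) (by rintro ((f | f) | f) <;> rfl)

@[simp]
theorem EQF.realize_liftLeft (θ : EQF L (F₀ ⊕ F₁) (Sum.elim ar₀ ar₁)) (fi₀ : Interp F₀ ar₀ M)
    (fi₁ : Interp F₁ ar₁ M) (fi₂ : Interp F₂ ar₂ M) (s : ℕ → M) :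
    (θ.liftLeft (ar₂ := ar₂)).realize (sumInterp fi₀ (sumInterp fi₁ fi₂)) s ↔
      θ.realize (sumInterp fi₀ fi₁) s := by
  rw [liftLeft, realize_mapF]
  congr! 1
  funext f
  cases f <;> rfl

@[simp]
theorem EQF.realize_liftRight (θ : EQF L (F₀ ⊕ F₂) (Sum.elim ar₀ ar₂)) (fi₀ : Interp F₀ ar₀ M)
    (fi₁ : Interp F₁ ar₁ M) (fi₂ : Interp F₂ ar₂ M) (s : ℕ → M) :
    (θ.liftRight (ar₁ := ar₁)).realize (sumInterp fi₀ (sumInterp fi₁ fi₂)) s ↔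
      θ.realize (sumInterp fi₀ fi₂) s := by
  rw [liftRight, realize_mapF]
  congr! 1
  funext f
  cases f <;> rfl

@[simp]
theorem EQF.realize_assocF (θ : EQF L ((F₀ ⊕ S) ⊕ F₁) (Sum.elim (Sum.elim ar₀ arS) ar₁))
    (fi₀ : Interp F₀ ar₀ M) (fiS : Interp S arS M) (fi₁ : Interp F₁ ar₁ M) (s : ℕ → M) :
    θ.assocF.realize (sumInterp fi₀ (sumInterp fiS fi₁)) s ↔
      θ.realize (sumInterp (sumInterp fi₀ fiS) fi₁) s := by
  rw [assocF, realize_mapF]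
  congr! 1
  funext f
  rcases f with (f | f) | f <;> rfl

theorem Defines.of_iff {δ : EQF L F₀ ar₀} {θ : EQF L (F₀ ⊕ F₁) (Sum.elim ar₀ ar₁)}
    {P Q : Interp F₀ ar₀ M → Prop}
    (h : Defines M δ θ P) (hPQ : ∀ fi₀, Q fi₀ ↔ P fi₀) : Defines M δ θ Q :=
  fun fi₀ => (hPQ fi₀).trans (h fi₀)

theorem Defines.and {δ : EQF L F₀ ar₀} {θ₁ : EQF L (F₀ ⊕ F₁) (Sum.elim ar₀ ar₁)}
    {θ₂ : EQF L (F₀ ⊕ F₂) (Sum.elim ar₀ ar₂)} {P₁ P₂ : Interp F₀ ar₀ M → Prop}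
    (h₁ : Defines M δ θ₁ P₁) (h₂ : Defines M δ θ₂ P₂) :
    Defines M δ (.and θ₁.liftLeft θ₂.liftRight) fun fi₀ => P₁ fi₀ ∧ P₂ fi₀ := by
  intro fi₀
  simp only [h₁ fi₀, h₂ fi₀, exists_sumInterp_iff, EQF.realize, EQF.realize_liftLeft,
    EQF.realize_liftRight, imp_and, forall_and, exists_and_left, exists_and_right]

theorem Defines.relativize {δ χ : EQF L F₀ ar₀} {θ : EQF L (F₀ ⊕ F₁) (Sum.elim ar₀ ar₁)}
    {P : Interp F₀ ar₀ M → Prop} (h : Defines M (δ.and χ) θ P) :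
    Defines M δ (.or χ.not.inlF θ) P := by
  intro fi₀
  simp only [h fi₀, EQF.realize, EQF.realize_inlF, EQF.realize_not, and_imp, ← imp_iff_not_or]

theorem Defines.exists_context {δ : EQF L F₀ ar₀}
    {θ : EQF L ((F₀ ⊕ S) ⊕ F₁) (Sum.elim (Sum.elim ar₀ arS) ar₁)}
    {P : Interp (F₀ ⊕ S) (Sum.elim ar₀ arS) M → Prop} (h : Defines M δ.inlF θ P) :
    Defines M δ θ.assocF fun fi₀ => ∃ fiS, P (sumInterp fi₀ fiS) := by
  intro fi₀
  simp only [h _, exists_sumInterp_iff, EQF.realize_assocF, EQF.realize_inlF]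

theorem defines_inlF (δ χ : EQF L F₀ ar₀) :
    Defines M δ (χ.inlF (F₁ := PEmpty) (ar₁ := PEmpty.elim))
      fun fi₀ => ∀ s, δ.realize fi₀ s → χ.realize fi₀ s := by
  intro fi₀
  simp only [EQF.realize_inlF]
  exact ⟨fun h => ⟨(·.elim), h⟩, fun ⟨_, h⟩ => h⟩

end Defines

section Translation

variable {F₀ : Type} {ar₀ : F₀ → ℕ} {j : ℕ} {V : List ℕ} {T : ℕ → ETerm L F₀ ar₀}
  {δ : EQF L F₀ ar₀}

def HasTranslation (φ : TF L) (j : ℕ) (V : List ℕ) (T : ℕ → ETerm L F₀ ar₀)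
    (δ : EQF L F₀ ar₀) : Prop :=
  ∃ (F₁ : Type) (_ : Fintype F₁) (ar₁ : F₁ → ℕ) (θ : EQF L (F₀ ⊕ F₁) (Sum.elim ar₀ ar₁)),
    θ.varsLT (j + uCount φ) ∧ ∀ (M : Type w) [L.Structure M] [Nontrivial M],
      Defines M δ θ fun fi₀ => strictSat M (codedTeam V T fi₀ δ) φ

theorem hasTranslation_of_forall {φ : TF L} (χ : EQF L F₀ ar₀) (hχ : χ.varsLT j)
    (h : ∀ (M : Type w) [L.Structure M] (fi₀ : Interp F₀ ar₀ M),
      strictSat M (codedTeam V T fi₀ δ) φ ↔ ∀ s, δ.realize fi₀ s → χ.realize fi₀ s) :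
    HasTranslation.{_, _, w} φ j V T δ :=
  ⟨PEmpty, inferInstance, PEmpty.elim, χ.inlF,
    χ.varsLT_mapF _ _ (χ.varsLT_mono (Nat.le_add_right _ _) hχ),
    fun M _ _ => (defines_inlF δ χ).of_iff (h M)⟩

theorem hasTranslation_dep (hT : ∀ x ∈ V, (T x).varsLT j) (xs : List ℕ) (y : ℕ)
    (hV : freeVars (.dep xs y : TF L) ⊆ {x | x ∈ V}) :
    HasTranslation.{_, _, w} (.dep xs y : TF L) j V T δ := by
  refine ⟨Unit, inferInstance, fun _ => xs.length,
    .teq (T y).inlF (.efunc (.inr ()) fun i : Fin xs.length => (T xs[i]).inlF), ?_, ?_⟩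
  · refine ⟨(T y).varsLT_mapF _ _ (hT y (hV (Or.inr rfl))), fun i => ?_⟩
    exact (T xs[i]).varsLT_mapF _ _ (hT _ (hV (Or.inl (List.getElem_mem _))))
  · intro M _ _ fi₀
    refine (strictSat_codedTeam_dep xs y hV).trans ?_
    simp only [EQF.realize, ETerm.realize, ETerm.realize_inlF]
    exact ⟨fun ⟨g, h⟩ => ⟨fun _ => g, h⟩, fun ⟨fi₁, h⟩ => ⟨fi₁ (), h⟩⟩

def skolemTerm (j n : ℕ) : ETerm L (F₀ ⊕ Fin j) (Sum.elim ar₀ fun _ => j) :=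
  if h : n < j then .efunc (.inr ⟨n, h⟩) fun i => .var i else .var n

theorem realize_skolemTerm (fi₀ : Interp F₀ ar₀ M)
    (g : Interp (Fin j) (fun _ => j) M) (s : ℕ → M) (n : ℕ) :
    (skolemTerm j n : ETerm L (F₀ ⊕ Fin j) _).realize (sumInterp fi₀ g) s = skolemPoint g s n := by
  unfold skolemTerm skolemPoint
  split_ifs <;> rfl

theorem hasTranslation_inc (hT : ∀ x ∈ V, (T x).varsLT j) (hδ : δ.varsLT j) (xs ys : List ℕ)
    (hV : freeVars (.inc xs ys : TF L) ⊆ {x | x ∈ V}) :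
    HasTranslation.{_, _, w} (.inc xs ys : TF L) j V T δ := by
  have hxs : ∀ x ∈ xs, x ∈ V := fun x hx => hV (List.mem_append_left ys hx)
  have hys : ∀ y ∈ ys, y ∈ V := fun y hy => hV (List.mem_append_right xs hy)
  have hσ : ∀ n < j, (skolemTerm j n : ETerm L (F₀ ⊕ Fin j) (Sum.elim ar₀ _)).varsLT j :=
    fun n hn => by simp [skolemTerm, hn, ETerm.varsLT]
  refine ⟨Fin j, inferInstance, fun _ => j, (δ.inlF.vsub (skolemTerm j)).andEqs
    (xs.map fun x => (T x).inlF) (ys.map fun y => (T y).inlF.vsub (skolemTerm j)), ?_, ?_⟩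
  · refine EQF.varsLT_andEqs _ _ _ (EQF.varsLT_vsub hσ _ (δ.varsLT_mapF _ _ hδ)) ?_ ?_
    · simp only [List.mem_map]
      rintro _ ⟨x, hx, rfl⟩
      exact (T x).varsLT_mapF _ _ (hT x (hxs x hx))
    · simp only [List.mem_map]
      rintro _ ⟨y, hy, rfl⟩
      exact ETerm.varsLT_vsub hσ _ ((T y).varsLT_mapF _ _ (hT y (hys y hy)))
  · intro M _ _ fi₀
    have values_congr {zs : List ℕ} (hzs : ∀ z ∈ zs, z ∈ V) {s t : ℕ → M}
        (h : ∀ n < j, s n = t n) :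
        zs.map (fun z => (T z).realize fi₀ s) = zs.map fun z => (T z).realize fi₀ t :=
      List.map_congr_left fun z hz => (T z).realize_congr_lt fi₀ h (hT z (hzs z hz))
    refine (strictSat_codedTeam_inc xs ys hV).trans ?_
    rw [forall_exists_iff_exists_skolem (fun s t h => (δ.realize_congr_lt fi₀ h hδ).1)
      fun s t s' t' h h' hQ => ⟨(δ.realize_congr_lt fi₀ h' hδ).1 hQ.1,
        (values_congr hxs h).symm.trans (hQ.2.trans (values_congr hys h'))⟩]
    simp only [EQF.realize_andEqs, EQF.realize_vsub, ETerm.realize_vsub, realize_skolemTerm,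
      EQF.realize_inlF, ETerm.realize_inlF, List.map_map, comp_def]

theorem HasTranslation.and {φ₁ φ₂ : TF L} (h₁ : HasTranslation.{_, _, w} φ₁ j V T δ)
    (h₂ : HasTranslation.{_, _, w} φ₂ j V T δ) : HasTranslation.{_, _, w} (.and φ₁ φ₂) j V T δ := by
  obtain ⟨F₁, _, ar₁, θ₁, hθ₁, hdef₁⟩ := h₁
  obtain ⟨F₂, _, ar₂, θ₂, hθ₂, hdef₂⟩ := h₂
  have hu : j + uCount φ₁ ≤ j + uCount (.and φ₁ φ₂) ∧ j + uCount φ₂ ≤ j + uCount (.and φ₁ φ₂) := by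
    simp only [uCount]
    omega
  exact ⟨F₁ ⊕ F₂, inferInstance, Sum.elim ar₁ ar₂, .and θ₁.liftLeft θ₂.liftRight,
    ⟨θ₁.varsLT_mapF _ _ (θ₁.varsLT_mono hu.1 hθ₁), θ₂.varsLT_mapF _ _ (θ₂.varsLT_mono hu.2 hθ₂)⟩,
    fun M _ _ => (hdef₁ M).and (hdef₂ M)⟩

def splitEq (V : List ℕ) (T : ℕ → ETerm L F₀ ar₀) :
    EQF L (F₀ ⊕ (Unit ⊕ Unit)) (Sum.elim ar₀ (Sum.elim (fun _ => 0) fun _ => V.length)) :=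
  .teq (.efunc (.inr (.inr ())) fun i : Fin V.length => (T V[i]).inlF)
    (.efunc (.inr (.inl ())) Fin.elim0)

theorem realize_splitEq (fi₀ : Interp F₀ ar₀ M)
    (fiS : Interp (Unit ⊕ Unit) (Sum.elim (fun _ => 0) fun _ => V.length) M) (s : ℕ → M) :
    (splitEq V T).realize (sumInterp fi₀ fiS) s ↔
      fiS (.inr ()) (valTuple V T fi₀ s) = fiS (.inl ()) Fin.elim0 := by
  simp only [splitEq, EQF.realize, ETerm.realize, ETerm.realize_inlF]
  exact Iff.of_eq (congrArg₂ _ rfl (congrArg _ (funext fun i => i.elim0)))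

theorem varsLT_splitEq (hT : ∀ x ∈ V, (T x).varsLT j) : (splitEq V T).varsLT j :=
  ⟨fun i => (T V[i]).varsLT_mapF _ _ (hT _ (List.getElem_mem _)), fun i => i.elim0⟩

theorem strictSat_codedTeam_or_iff_exists_interp [Nontrivial M]
    (fi₀ : Interp F₀ ar₀ M) (φ₁ φ₂ : TF L) :
    strictSat M (codedTeam V T fi₀ δ) (.or φ₁ φ₂) ↔
      ∃ fiS : Interp (Unit ⊕ Unit) (Sum.elim (fun _ => 0) fun _ => V.length) M,
        strictSat M (codedTeam V (fun x => (T x).inlF) (sumInterp fi₀ fiS)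
          (δ.inlF.and (splitEq V T))) φ₁ ∧
        strictSat M (codedTeam V (fun x => (T x).inlF) (sumInterp fi₀ fiS)
          (δ.inlF.and (splitEq V T).not)) φ₂ := by
  simp only [strictSat_codedTeam_or, codedTeam_inlF_and, EQF.realize_not, realize_splitEq]
  constructor
  · rintro ⟨c, g, h⟩
    exact ⟨sumInterp (fun _ _ => c) fun _ => g, h⟩
  · rintro ⟨fiS, h⟩
    exact ⟨_, _, h⟩

theorem hasTranslation_or (hT : ∀ x ∈ V, (T x).varsLT j) {φ₁ φ₂ : TF L}
    (h₁ : HasTranslation.{_, _, w} φ₁ j V (fun x => (T x).inlF) (δ.inlF.and (splitEq V T)))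
    (h₂ : HasTranslation.{_, _, w} φ₂ j V (fun x => (T x).inlF) (δ.inlF.and (splitEq V T).not)) :
    HasTranslation.{_, _, w} (.or φ₁ φ₂) j V T δ := by
  obtain ⟨F₁, _, ar₁, θ₁, hθ₁, hdef₁⟩ := h₁
  obtain ⟨F₂, _, ar₂, θ₂, hθ₂, hdef₂⟩ := h₂
  have hu : j ≤ j + uCount (.or φ₁ φ₂) ∧ j + uCount φ₁ ≤ j + uCount (.or φ₁ φ₂) ∧
      j + uCount φ₂ ≤ j + uCount (.or φ₁ φ₂) := by
    simp only [uCount]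
    omega
  have hsplit := (splitEq V T).varsLT_mono hu.1 (varsLT_splitEq hT)
  refine ⟨(Unit ⊕ Unit) ⊕ (F₁ ⊕ F₂), inferInstance, Sum.elim _ (Sum.elim ar₁ ar₂),
    (EQF.and (EQF.or (splitEq V T).not.inlF θ₁).liftLeft
      (EQF.or (splitEq V T).not.not.inlF θ₂).liftRight).assocF, ?_, fun M _ _ => ?_⟩
  · refine EQF.varsLT_mapF _ _ _ ⟨EQF.varsLT_mapF _ _ _ ⟨?_, θ₁.varsLT_mono hu.2.1 hθ₁⟩,
      EQF.varsLT_mapF _ _ _ ⟨?_, θ₂.varsLT_mono hu.2.2 hθ₂⟩⟩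
    · exact EQF.varsLT_mapF _ _ _ (EQF.varsLT_not _ hsplit)
    · exact EQF.varsLT_mapF _ _ _ (EQF.varsLT_not _ (EQF.varsLT_not _ hsplit))
  · exact ((hdef₁ M).relativize.and (hdef₂ M).relativize).exists_context.of_iff
      fun fi₀ => strictSat_codedTeam_or_iff_exists_interp fi₀ φ₁ φ₂

def exTerms (V : List ℕ) (T : ℕ → ETerm L F₀ ar₀) (x : ℕ) :
    ℕ → ETerm L (F₀ ⊕ Unit) (Sum.elim ar₀ fun _ => V.length) :=
  update (fun y => (T y).inlF) x (.efunc (.inr ()) fun i : Fin V.length => (T V[i]).inlF)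

theorem varsLT_exTerms (hT : ∀ x ∈ V, (T x).varsLT j) (x : ℕ) :
    ∀ y ∈ x :: V, (exTerms V T x y).varsLT j := by
  intro y hy
  by_cases hyx : y = x
  · rw [hyx, exTerms, update_self]
    exact fun i => (T V[i]).varsLT_mapF _ _ (hT _ (List.getElem_mem _))
  · rw [exTerms, update_of_ne hyx]
    exact (T y).varsLT_mapF _ _ (hT y (List.mem_of_ne_of_mem hyx hy))

theorem strictSat_codedTeam_ex_iff_exists_interp [Nonempty M]
    (fi₀ : Interp F₀ ar₀ M) (x : ℕ) (φ : TF L) :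
    strictSat M (codedTeam V T fi₀ δ) (.ex x φ) ↔ ∃ fiU : Interp Unit (fun _ => V.length) M,
      strictSat M (codedTeam (x :: V) (exTerms V T x) (sumInterp fi₀ fiU) δ.inlF) φ := by
  have hteam (fiU : Interp Unit (fun _ => V.length) M) :
      codedTeam (x :: V) (exTerms V T x) (sumInterp fi₀ fiU) δ.inlF =
        (fun s => update (codedAssign V T fi₀ s) x (some (fiU () (valTuple V T fi₀ s)))) ''
          {s | δ.realize fi₀ s} := by
    simp only [codedTeam, exTerms, codedAssign_cons_update, codedAssign_inlF, EQF.realize_inlF,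
      ETerm.realize, ETerm.realize_inlF]
    rfl
  simp only [strictSat_codedTeam_ex, hteam]
  exact ⟨fun ⟨g, h⟩ => ⟨fun _ => g, h⟩, fun ⟨fiU, h⟩ => ⟨fiU (), h⟩⟩

theorem hasTranslation_ex {x : ℕ} {φ : TF L}
    (h : HasTranslation.{_, _, w} φ j (x :: V) (exTerms V T x) δ.inlF) :
    HasTranslation.{_, _, w} (.ex x φ) j V T δ := by
  obtain ⟨F₁, _, ar₁, θ, hθ, hdef⟩ := h
  exact ⟨Unit ⊕ F₁, inferInstance, Sum.elim _ ar₁, θ.assocF, θ.varsLT_mapF _ _ hθ,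
    fun M _ _ => (hdef M).exists_context.of_iff
      fun fi₀ => strictSat_codedTeam_ex_iff_exists_interp fi₀ x φ⟩

theorem varsLT_update_var (hT : ∀ x ∈ V, (T x).varsLT j) (x : ℕ) :
    ∀ y ∈ x :: V, (update T x (.var j) y).varsLT (j + 1) := by
  intro y hy
  by_cases hyx : y = x
  · subst hyx
    simp [ETerm.varsLT]
  · rw [update_of_ne hyx]
    exact (T y).varsLT_mono j.le_succ (hT y (List.mem_of_ne_of_mem hyx hy))

theorem hasTranslation_all (hT : ∀ x ∈ V, (T x).varsLT j) (hδ : δ.varsLT j) {x : ℕ} {φ : TF L}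
    (h : HasTranslation.{_, _, w} φ (j + 1) (x :: V) (update T x (.var j)) δ) :
    HasTranslation.{_, _, w} (.all x φ) j V T δ := by
  obtain ⟨F₁, _, ar₁, θ, hθ, hdef⟩ := h
  refine ⟨F₁, inferInstance, ar₁, θ, θ.varsLT_mono ?_ hθ,
    fun M _ _ => (hdef M).of_iff fun _ => strictSat_codedTeam_all hT hδ x φ⟩
  simp only [uCount]
  omega

theorem subset_cons_of_sdiff_subset {S : Set ℕ} {x : ℕ} (h : S \ {x} ⊆ {y | y ∈ V}) :
    S ⊆ {y | y ∈ x :: V} :=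
  fun _ hy => List.mem_cons.2 (Set.sdiff_subset_iff.1 h hy)

theorem hasTranslation_of_not_hasIndep (φ : TF L) (hφ : ¬ hasIndep φ) :
    ∀ {F₀ : Type} {ar₀ : F₀ → ℕ} (j : ℕ) (V : List ℕ) (T : ℕ → ETerm L F₀ ar₀)
      (δ : EQF L F₀ ar₀), freeVars φ ⊆ {x | x ∈ V} → (∀ x ∈ V, (T x).varsLT j) → δ.varsLT j →
      HasTranslation.{_, _, w} φ j V T δ := by
  induction φ with
  | rel R ts | nrel R ts =>
    intro _ _ j V T δ hV hT _
    have hts i : (tsubst T (ts i)).varsLT j :=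
      varsLT_tsubst hT _ fun x hx => hV (Set.mem_iUnion.2 ⟨i, hx⟩)
    first
    | exact hasTranslation_of_forall (.rel R fun i => tsubst T (ts i)) hts
        fun M _ _ => strictSat_codedTeam_rel R ts hV
    | exact hasTranslation_of_forall (.nrel R fun i => tsubst T (ts i)) hts
        fun M _ _ => strictSat_codedTeam_nrel R ts hV
  | teq t u | tne t u =>
    intro _ _ j V T δ hV hT _
    have htu : (tsubst T t).varsLT j ∧ (tsubst T u).varsLT j :=
      ⟨varsLT_tsubst hT t fun x hx => hV (Or.inl hx), varsLT_tsubst hT u fun x hx => hV (Or.inr hx)⟩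
    first
    | exact hasTranslation_of_forall (.teq (tsubst T t) (tsubst T u)) htu
        fun M _ _ => strictSat_codedTeam_teq t u hV
    | exact hasTranslation_of_forall (.tne (tsubst T t) (tsubst T u)) htu
        fun M _ _ => strictSat_codedTeam_tne t u hV
  | dep xs y => exact fun j V T δ hV hT _ => hasTranslation_dep hT xs y hV
  | indep => exact absurd trivial hφ
  | inc xs ys => exact fun j V T δ hV hT hδ => hasTranslation_inc hT hδ xs ys hV
  | and φ₁ φ₂ ih₁ ih₂ =>
    intro _ _ j V T δ hV hT hδ
    exact (ih₁ (hφ ∘ Or.inl) j V T δ (fun x hx => hV (Or.inl hx)) hT hδ).and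
      (ih₂ (hφ ∘ Or.inr) j V T δ (fun x hx => hV (Or.inr hx)) hT hδ)
  | or φ₁ φ₂ ih₁ ih₂ =>
    intro _ _ j V T δ hV hT hδ
    have hsplit := varsLT_splitEq hT
    exact hasTranslation_or hT
      (ih₁ (hφ ∘ Or.inl) j V _ _ (fun x hx => hV (Or.inl hx))
        (fun x hx => (T x).varsLT_mapF _ _ (hT x hx)) ⟨δ.varsLT_mapF _ _ hδ, hsplit⟩)
      (ih₂ (hφ ∘ Or.inr) j V _ _ (fun x hx => hV (Or.inr hx))
        (fun x hx => (T x).varsLT_mapF _ _ (hT x hx))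
        ⟨δ.varsLT_mapF _ _ hδ, EQF.varsLT_not _ hsplit⟩)
  | ex x φ ih =>
    intro _ _ j V T δ hV hT hδ
    exact hasTranslation_ex (ih hφ j (x :: V) _ _ (subset_cons_of_sdiff_subset hV)
      (varsLT_exTerms hT x) (δ.varsLT_mapF _ _ hδ))
  | all x φ ih =>
    intro _ _ j V T δ hV hT hδ
    exact hasTranslation_all hT hδ (ih hφ (j + 1) (x :: V) _ δ (subset_cons_of_sdiff_subset hV)
      (varsLT_update_var hT x) (δ.varsLT_mono j.le_succ hδ))

end Translation

end TeamSem

namespace TeamSem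

theorem dep_inc_to_eso_general {L : FirstOrder.Language.{u, v}} (k : ℕ) (ψ : TF L)
    (hsent : freeVars ψ = ∅) (huk : uCount ψ ≤ k)
    (hnoindep : ¬ hasIndep ψ) :
    ∃ (n : ℕ) (ar : Fin n → ℕ) (r : ℕ) (θ : EQF L (Fin n) ar),
      r ≤ k ∧ θ.varsLT r ∧
      ∀ (A : Type w) [L.Structure A], (∃ a b : A, a ≠ b) →
        (tTrue A ψ ↔ esoTrue A θ) := by
  -- `EQF` has no `⊤`, and no variable is available yet: `c = c` for a dummy constant serves.
  let c : ETerm L Unit fun _ => 0 := .efunc () Fin.elim0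
  obtain ⟨F₁, _, ar₁, θ, hθ, hdef⟩ := hasTranslation_of_not_hasIndep.{_, _, w} ψ hnoindep 0 []
    (fun _ => c) (.teq c c) (by simp [hsent]) (by simp) ⟨fun i => i.elim0, fun i => i.elim0⟩
  let e := Fintype.equivFin (Unit ⊕ F₁)
  refine ⟨_, _, uCount ψ, θ.mapEquiv e, huk, θ.varsLT_mapF _ _ (by simpa using hθ),
    fun A _ ⟨a, b, hab⟩ => ?_⟩
  have : Nontrivial A := ⟨⟨a, b, hab⟩⟩
  calc tTrue A ψ ↔ ∃ _ : Interp Unit (fun _ => 0) A, tTrue A ψ :=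
        ⟨fun h => ⟨fun _ _ => a, h⟩, fun ⟨_, h⟩ => h⟩
    _ ↔ ∃ fi₀ fi₁, ∀ s, θ.realize (sumInterp fi₀ fi₁) s := exists_congr fun fi₀ => by
        rw [tTrue, ← codedTeam_nil (fun _ => c) fi₀ (δ := .teq c c) fun _ => rfl]
        exact (hdef A fi₀).trans (by simp [EQF.realize])
    _ ↔ esoTrue A (θ.mapEquiv e) := by rw [esoTrue_mapEquiv, esoTrue, exists_sumInterp_iff]

/-- For every sentence `ψ ∈ FO(=(…), ⊆)(k∀)` (dependence and inclusion atoms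
allowed, but no independence atoms) there is a sentence `τ_ψ ∈ ESO_f(k∀)` (in
Skolem normal form `∃f₁…∃fₙ ∀x₁…∀x_r θ` with `r ≤ k` and `θ` quantifier-free) such
that for all structures `A` with at least two elements, `A ⊨ ψ` under strict team
semantics iff `A ⊨ τ_ψ`. -/
theorem dep_inc_to_eso {L : FirstOrder.Language.{u, v}} (k : ℕ) (ψ : TF L)
    (hsent : freeVars ψ = ∅) (hnodup : (boundVars ψ).Nodup) (huk : uCount ψ ≤ k)
    (hnoindep : ¬ hasIndep ψ) :
    ∃ (n : ℕ) (ar : Fin n → ℕ) (r : ℕ) (θ : EQF L (Fin n) ar),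
      r ≤ k ∧ θ.varsLT r ∧
      ∀ (A : Type w) [L.Structure A], (∃ a b : A, a ≠ b) →
        (tTrue A ψ ↔ esoTrue A θ) :=
  dep_inc_to_eso_general k ψ hsent huk hnoindep

end TeamSem
end

section
/- For every sentence φ ∈ ESO_f(k∀) there is a sentence φ′ of independence logic with at most 2k universal quantifiers (φ′ ∈ FO(⊥_c)(2k∀)) such that for all structures A with at least two elements: A ⊨ φ if and only if A ⊨ φ′ under strict team semantics. -/
open FirstOrder FirstOrder.Language FirstOrder.Language.Structure

namespace TeamSem

/-!
The Skolem functions are simulated by a team. Quantify universally two copies `x̄`, `x̄'` of the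
`r` variables of `θ`, and for every subterm `e = f t̄` of `θ` quantify existentially `y_e` and
`y'_e`, meant to hold the values of `e` at `x̄` and at `x̄'`. The atoms `y_e ⊥_x̄ y_e` and
`y'_e ⊥_x̄' y'_e` make `y_e` a function of `x̄` and `y'_e` a function of `x̄'`, and the
quantifier-free consistency formulas `t̄(x̄) ≠ t̄'(x̄') ∨ y_{f t̄} = y'_{f t̄'}`, which hold in a
team iff they hold in each of its assignments, say that the stored values respect equality of
arguments. Comparing the two copies at an assignment whose `x̄'` repeats `x̄` shows that `y'_e`
computes the same function as `y_e`; then comparing them at an arbitrary assignment shows that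
the values stored for `f t̄` and `f t̄'` agree whenever the arguments do, so they define `f`.
Finally `θ` is evaluated with every `e` replaced by `y_e`.
-/

section TeamSemantics

variable {L : FirstOrder.Language.{u, v}} {M : Type w} [L.Structure M]

lemma strictSat_foldr_and (X : Set (ℕ → Option M)) (l : List (TF L)) (b : TF L) :
    strictSat M X (l.foldr .and b) ↔ (∀ ψ ∈ l, strictSat M X ψ) ∧ strictSat M X b := by
  induction l with
  | nil => simp
  | cons a l ih =>
    change strictSat M X a ∧ _ ↔ _
    rw [ih, List.forall_mem_cons, and_assoc]

lemma foSat_foldr_or (s : ℕ → Option M) (l : List (TF L)) (b : TF L) :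
    foSat M s (l.foldr .or b) ↔ (∃ ψ ∈ l, foSat M s ψ) ∨ foSat M s b := by
  induction l with
  | nil => simp
  | cons a l ih =>
    change foSat M s a ∨ _ ↔ _
    rw [ih, List.exists_mem_cons_iff, or_assoc]

lemma strictSat_iff_foSat {φ : TF L} (hfo : isFO φ) (hqf : quantFree φ)
    (X : Set (ℕ → Option M)) : strictSat M X φ ↔ ∀ s ∈ X, foSat M s φ := by
  induction φ generalizing X with
  | rel | nrel | teq | tne => rfl
  | dep | indep | inc => exact hfo.elim
  | ex | all => exact hqf.elim
  | and φ ψ ihφ ihψ =>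
    change strictSat M X φ ∧ strictSat M X ψ ↔ ∀ s ∈ X, foSat M s φ ∧ foSat M s ψ
    rw [ihφ hfo.1 hqf.1, ihψ hfo.2 hqf.2]
    exact forall₂_and.symm
  | or φ ψ ihφ ihψ =>
    change (∃ Y Z, _) ↔ ∀ s ∈ X, foSat M s φ ∨ foSat M s ψ
    constructor
    · rintro ⟨Y, Z, rfl, -, hY, hZ⟩ s (hs | hs)
      · exact .inl ((ihφ hfo.1 hqf.1 Y).1 hY s hs)
      · exact .inr ((ihψ hfo.2 hqf.2 Z).1 hZ s hs)
    · intro h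
      refine ⟨{s ∈ X | foSat M s φ}, {s ∈ X | ¬ foSat M s φ}, ?_, ?_,
        (ihφ hfo.1 hqf.1 _).2 fun s hs => hs.2,
        (ihψ hfo.2 hqf.2 _).2 fun s hs => (h s hs.1).resolve_left hs.2⟩ <;>
      · ext s
        simp only [Set.mem_union, Set.mem_inter_iff, Set.mem_ofPred_eq]
        tauto

lemma strictSat_indep_self_iff (X : Set (ℕ → Option M)) (xs : List ℕ) (y : ℕ) :
    strictSat (L := L) M X (.indep xs [y] [y]) ↔ strictSat (L := L) M X (.dep xs y) := by
  constructor
  · intro h s hs s' hs' hxs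
    obtain ⟨s'', -, -, h₁, h₂⟩ := h s hs s' hs' hxs
    simp only [List.map_cons, List.map_nil, List.cons.injEq, and_true] at h₁ h₂
    rw [← h₁, h₂]
  · intro h s hs s' hs' hxs
    exact ⟨s, hs, rfl, rfl, by simp [h s hs s' hs' hxs]⟩

def assignOn (l : List ℕ) (w : ℕ → M) (s : ℕ → Option M) : ℕ → Option M :=
  fun i => if i ∈ l then some (w i) else s i

lemma assignOn_of_mem {l : List ℕ} {i : ℕ} (h : i ∈ l) (w : ℕ → M) (s : ℕ → Option M) :
    assignOn l w s i = some (w i) := if_pos h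

lemma assignOn_of_not_mem {l : List ℕ} {i : ℕ} (h : i ∉ l) (w : ℕ → M) (s : ℕ → Option M) :
    assignOn l w s i = s i := if_neg h

@[simp]
lemma assignOn_nil (w : ℕ → M) (s : ℕ → Option M) : assignOn [] w s = s := by
  funext i
  simp [assignOn]

lemma strictSat_alls_iff [Nonempty M] (l : List ℕ) (φ : TF L) (X : Set (ℕ → Option M)) :
    strictSat M X (alls l φ) ↔ strictSat M {t | ∃ s ∈ X, ∃ w, t = assignOn l w s} φ := by
  classical
  induction l generalizing X with
  | nil =>
    refine iff_of_eq (congrArg (strictSat M · φ) ?_)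
    ext t
    simp
  | cons v vs ih =>
    refine (ih _).trans (iff_of_eq (congrArg (strictSat M · φ) ?_))
    ext t
    simp only [Set.mem_ofPred_eq]
    constructor
    · rintro ⟨-, ⟨s, hs, m, rfl⟩, w, rfl⟩
      refine ⟨s, hs, fun i => if i ∈ vs then w i else m, funext fun i => ?_⟩
      by_cases hi : i ∈ vs
      · simp [assignOn, hi]
      · by_cases hiv : i = v
        · subst hiv
          simp [assignOn, hi]
        · simp [assignOn, hi, hiv]
    · rintro ⟨s, hs, w, rfl⟩
      refine ⟨_, ⟨s, hs, w v, rfl⟩, w, funext fun i => ?_⟩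
      by_cases hi : i ∈ vs
      · simp [assignOn, hi]
      · by_cases hiv : i = v <;> simp [assignOn, hi, hiv]

lemma tTrue_alls_range_iff [Nonempty M] (m : ℕ) (φ : TF L) :
    tTrue M (alls (List.range m) φ) ↔
      strictSat M (Set.range fun w => assignOn (List.range m) w (emptyAssign M)) φ := by
  rw [tTrue, strictSat_alls_iff]
  simp [Set.range, eq_comm]

lemma exists_of_strictSat_exs {l : List ℕ} {φ : TF L} {X : Set (ℕ → Option M)}
    (h : strictSat M X (exs l φ)) :
    ∃ g : (ℕ → Option M) → ℕ → Option M, (∀ s, ∀ i ∉ l, g s i = s i) ∧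
      strictSat M (g '' X) φ := by
  induction l generalizing X with
  | nil => exact ⟨id, fun _ _ _ => rfl, by rwa [Set.image_id]⟩
  | cons v vs ih =>
    obtain ⟨F, hF⟩ := h
    obtain ⟨g, hg, hgφ⟩ := ih hF
    refine ⟨fun s => g (Function.update s v (some (F s))), fun s i hi => ?_,
      by rwa [← Set.image_comp] at hgφ⟩
    rw [List.mem_cons, not_or] at hi
    simp only [hg _ i hi.2, Function.update_of_ne hi.1]

lemma strictSat_exs_of_assignOn {l : List ℕ} {φ : TF L} {X : Set (ℕ → Option M)}
    (W : (ℕ → Option M) → ℕ → M)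
    (hW : ∀ s, ∀ v ∈ l, ∀ m, W (Function.update s v (some m)) = W s)
    (h : strictSat M ((fun s => assignOn l (W s) s) '' X) φ) : strictSat M X (exs l φ) := by
  classical
  induction l generalizing X with
  | nil => simpa [exs] using h
  | cons v vs ih =>
    refine ⟨fun s => W s v, ih (fun s u hu m => hW s u (List.mem_cons_of_mem _ hu) m) ?_⟩
    rw [Set.image_image]
    convert h using 2 with s -
    have hWs := hW s v List.mem_cons_self (W s v)
    funext i
    by_cases hi : i ∈ vs
    · simp [assignOn, hi, hWs]
    · by_cases hiv : i = v <;> simp [assignOn, hi, hiv, hWs]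

end TeamSemantics

section Connectives

variable {L : FirstOrder.Language.{u, v}}

lemma freeVars_alls (l : List ℕ) (φ : TF L) : freeVars (alls l φ) = freeVars φ \ {x | x ∈ l} := by
  induction l with
  | nil => simp [alls]
  | cons v vs ih =>
    rw [alls, freeVars, ih, Set.sdiff_sdiff]
    congr 1
    ext x
    simp

lemma freeVars_exs (l : List ℕ) (φ : TF L) : freeVars (exs l φ) = freeVars φ \ {x | x ∈ l} := by
  induction l with
  | nil => simp [exs]
  | cons v vs ih =>
    rw [exs, freeVars, ih, Set.sdiff_sdiff]
    congr 1
    ext x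
    simp

lemma boundVars_alls (l : List ℕ) (φ : TF L) : boundVars (alls l φ) = l ++ boundVars φ := by
  induction l <;> simp [alls, boundVars, *]

lemma boundVars_exs (l : List ℕ) (φ : TF L) : boundVars (exs l φ) = l ++ boundVars φ := by
  induction l <;> simp [exs, boundVars, *]

lemma uCount_alls (l : List ℕ) (φ : TF L) : uCount (alls l φ) = l.length + uCount φ := by
  induction l <;> simp [alls, uCount, *, add_right_comm]

lemma uCount_exs (l : List ℕ) (φ : TF L) : uCount (exs l φ) = uCount φ := by
  induction l <;> simp [exs, uCount, *]

lemma hasDep_alls (l : List ℕ) (φ : TF L) : hasDep (alls l φ) ↔ hasDep φ := by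
  induction l <;> simp [alls, hasDep, *]

lemma hasDep_exs (l : List ℕ) (φ : TF L) : hasDep (exs l φ) ↔ hasDep φ := by
  induction l <;> simp [exs, hasDep, *]

lemma hasInc_alls (l : List ℕ) (φ : TF L) : hasInc (alls l φ) ↔ hasInc φ := by
  induction l <;> simp [alls, hasInc, *]

lemma hasInc_exs (l : List ℕ) (φ : TF L) : hasInc (exs l φ) ↔ hasInc φ := by
  induction l <;> simp [exs, hasInc, *]

lemma not_hasDep_of_isFO {φ : TF L} (h : isFO φ) : ¬ hasDep φ := by
  induction φ <;> simp_all [isFO, hasDep]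

lemma not_hasInc_of_isFO {φ : TF L} (h : isFO φ) : ¬ hasInc φ := by
  induction φ <;> simp_all [isFO, hasInc]

lemma uCount_eq_zero_of_quantFree {φ : TF L} (h : quantFree φ) : uCount φ = 0 := by
  induction φ <;> simp_all [quantFree, uCount]

lemma boundVars_eq_nil_of_quantFree {φ : TF L} (h : quantFree φ) : boundVars φ = [] := by
  induction φ <;> simp_all [quantFree, boundVars]

lemma quantFree_foldr_and {l : List (TF L)} {b : TF L} (hl : ∀ ψ ∈ l, quantFree ψ)
    (hb : quantFree b) : quantFree (l.foldr .and b) := by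
  induction l <;> simp_all [quantFree]

lemma quantFree_foldr_or {l : List (TF L)} {b : TF L} (hl : ∀ ψ ∈ l, quantFree ψ)
    (hb : quantFree b) : quantFree (l.foldr .or b) := by
  induction l <;> simp_all [quantFree]

lemma isFO_foldr_or {l : List (TF L)} {b : TF L} (hl : ∀ ψ ∈ l, isFO ψ) (hb : isFO b) :
    isFO (l.foldr .or b) := by
  induction l <;> simp_all [isFO]

lemma not_hasDep_foldr_and {l : List (TF L)} {b : TF L} (hl : ∀ ψ ∈ l, ¬ hasDep ψ)
    (hb : ¬ hasDep b) : ¬ hasDep (l.foldr .and b) := by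
  induction l <;> simp_all [hasDep]

lemma not_hasInc_foldr_and {l : List (TF L)} {b : TF L} (hl : ∀ ψ ∈ l, ¬ hasInc ψ)
    (hb : ¬ hasInc b) : ¬ hasInc (l.foldr .and b) := by
  induction l <;> simp_all [hasInc]

lemma freeVars_foldr_and_subset {l : List (TF L)} {b : TF L} {S : Set ℕ}
    (hl : ∀ ψ ∈ l, freeVars ψ ⊆ S) (hb : freeVars b ⊆ S) : freeVars (l.foldr .and b) ⊆ S := by
  induction l <;> simp_all [freeVars]

lemma freeVars_foldr_or_subset {l : List (TF L)} {b : TF L} {S : Set ℕ}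
    (hl : ∀ ψ ∈ l, freeVars ψ ⊆ S) (hb : freeVars b ⊆ S) : freeVars (l.foldr .or b) ⊆ S := by
  induction l <;> simp_all [freeVars]

end Connectives

section Terms

variable {L : FirstOrder.Language.{u, v}} {M : Type w} [L.Structure M]

lemma oreal_func_some {s : ℕ → Option M} {m : ℕ} {g : L.Functions m} {ts : Fin m → L.Term ℕ}
    {a : Fin m → M} (h : ∀ i, oreal s (ts i) = some (a i)) :
    oreal s (.func g ts) = some (funMap g a) := by
  have hs : ∀ i, (oreal s (ts i)).isSome := fun i => by simp [h i]
  rw [oreal, dif_pos hs]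
  simp [h]

lemma oreal_func_congr {s s' : ℕ → Option M} {m : ℕ} {g : L.Functions m}
    {ts us : Fin m → L.Term ℕ} (h : ∀ i, oreal s (ts i) = oreal s' (us i)) :
    oreal s (.func g ts) = oreal s' (.func g us) := by
  by_cases hd : ∀ i, (oreal s (ts i)).isSome
  · have hv : ∀ i, oreal s (ts i) = some ((oreal s (ts i)).get (hd i)) := by simp
    rw [oreal_func_some hv, oreal_func_some fun i => (h i).symm.trans (hv i)]
  · have hd' : ¬ ∀ i, (oreal s' (us i)).isSome := by simpa [← h] using hd
    rw [oreal, dif_neg hd, oreal, dif_neg hd']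

lemma oreal_relabel (s : ℕ → Option M) (σ : ℕ → ℕ) (t : L.Term ℕ) :
    oreal s (t.relabel σ) = oreal (s ∘ σ) t := by
  induction t with
  | var n => rfl
  | func g ts ih => exact oreal_func_congr ih

lemma tvars_relabel (σ : ℕ → ℕ) (t : L.Term ℕ) : tvars (t.relabel σ) = σ '' tvars t := by
  induction t with
  | var n => simp [Term.relabel, tvars]
  | func g ts ih =>
    simp only [Term.relabel, tvars, Set.image_iUnion]
    exact Set.iUnion_congr ih

end Terms

section Subterms

variable {L : FirstOrder.Language.{u, v}} {F : Type} {ar : F → ℕ}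

def ETerm.efuncSubterms : ETerm L F ar → List (ETerm L F ar)
  | .var _ => []
  | .func _ ts => (List.finRange _).flatMap fun i => (ts i).efuncSubterms
  | .efunc f ts => .efunc f ts :: (List.finRange _).flatMap fun i => (ts i).efuncSubterms

def EQF.terms : EQF L F ar → List (ETerm L F ar)
  | .rel _ ts | .nrel _ ts => List.ofFn ts
  | .teq t u | .tne t u => [t, u]
  | .and φ ψ | .or φ ψ => φ.terms ++ ψ.terms

/-- The terms on which the translation `compile r E` below is faithful. -/
inductive ETerm.Compilable (r : ℕ) (E : List (ETerm L F ar)) : ETerm L F ar → Prop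
  | var {n : ℕ} : n < r → Compilable r E (.var n)
  | func {m : ℕ} (g : L.Functions m) {ts : Fin m → ETerm L F ar} :
      (∀ i, Compilable r E (ts i)) → Compilable r E (.func g ts)
  | efunc (f : F) {ts : Fin (ar f) → ETerm L F ar} :
      ETerm.efunc f ts ∈ E → (∀ i, Compilable r E (ts i)) → Compilable r E (.efunc f ts)

namespace ETerm

lemma Compilable.of_efunc {r : ℕ} {E : List (ETerm L F ar)} {f : F}
    {ts : Fin (ar f) → ETerm L F ar} (h : (ETerm.efunc f ts).Compilable r E) (i : Fin (ar f)) :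
    (ts i).Compilable r E := by
  cases h with
  | efunc _ _ hts => exact hts i

lemma Compilable.of_mem_efuncSubterms {r : ℕ} {E : List (ETerm L F ar)} {t e : ETerm L F ar}
    (ht : t.Compilable r E) (he : e ∈ t.efuncSubterms) : e.Compilable r E := by
  induction ht with
  | var => simp [efuncSubterms] at he
  | func g _ ih =>
    simp only [efuncSubterms, List.mem_flatMap, List.mem_finRange, true_and] at he
    obtain ⟨i, hi⟩ := he
    exact ih i hi
  | efunc f hmem hts ih =>
    simp only [efuncSubterms, List.mem_cons, List.mem_flatMap, List.mem_finRange,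
      true_and] at he
    rcases he with rfl | ⟨i, hi⟩
    · exact .efunc f hmem hts
    · exact ih i hi

lemma compilable_of_subset {r : ℕ} {E : List (ETerm L F ar)} {t : ETerm L F ar}
    (ht : t.varsLT r) (hE : t.efuncSubterms ⊆ E) : t.Compilable r E := by
  induction t with
  | var n => exact .var ht
  | func g ts ih =>
    refine .func g fun i => ih i (ht i) fun x hx => hE ?_
    simpa [efuncSubterms] using ⟨i, hx⟩
  | efunc f ts ih =>
    refine .efunc f (hE List.mem_cons_self) fun i => ih i (ht i) fun x hx => hE ?_
    simpa [efuncSubterms] using .inr ⟨i, hx⟩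

end ETerm

lemma EQF.varsLT_of_mem_terms {r : ℕ} {θ : EQF L F ar} (hθ : θ.varsLT r) {t : ETerm L F ar}
    (ht : t ∈ θ.terms) : t.varsLT r := by
  induction θ with
  | rel _ ts | nrel _ ts =>
    obtain ⟨i, rfl⟩ := List.mem_ofFn.1 ht
    exact hθ i
  | teq t u | tne t u =>
    simp only [EQF.terms, List.mem_cons, List.not_mem_nil, or_false] at ht
    rcases ht with rfl | rfl
    exacts [hθ.1, hθ.2]
  | and φ ψ ihφ ihψ | or φ ψ ihφ ihψ =>
    rcases List.mem_append.1 ht with h | h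
    exacts [ihφ hθ.1 h, ihψ hθ.2 h]

def EQF.efuncSubterms (θ : EQF L F ar) : List (ETerm L F ar) :=
  θ.terms.flatMap ETerm.efuncSubterms

lemma EQF.compilable_of_mem_terms {r : ℕ} {θ : EQF L F ar} (hθ : θ.varsLT r)
    {t : ETerm L F ar} (ht : t ∈ θ.terms) : t.Compilable r θ.efuncSubterms :=
  ETerm.compilable_of_subset (θ.varsLT_of_mem_terms hθ ht) fun _ he =>
    List.mem_flatMap.2 ⟨t, ht, he⟩

lemma EQF.compilable_of_mem_efuncSubterms {r : ℕ} {θ : EQF L F ar} (hθ : θ.varsLT r)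
    {e : ETerm L F ar} (he : e ∈ θ.efuncSubterms) : e.Compilable r θ.efuncSubterms := by
  obtain ⟨t, ht, het⟩ := List.mem_flatMap.1 he
  exact (θ.compilable_of_mem_terms hθ ht).of_mem_efuncSubterms het

end Subterms

section Translation

variable {L : FirstOrder.Language.{u, v}} {F : Type} {ar : F → ℕ}
variable (r : ℕ) (E : List (ETerm L F ar))

/-- Variable layout of the translation: `xᵢ = i` and `x'ᵢ = r + i` for `i < r`, and the `j`-th
term `e` of `E` gets `y_e = 2r + 2j`, meant to hold the value of `e` at `x̄`, and
`y'_e = y_e + 1`, meant to hold its value at `x̄'`. -/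
noncomputable def yVar (e : ETerm L F ar) : ℕ :=
  open Classical in 2 * r + 2 * E.idxOf e

def primeVar (i : ℕ) : ℕ := if i < r then r + i else i + 1

noncomputable def compile : ETerm L F ar → L.Term ℕ
  | .var i => .var i
  | .func g ts => .func g fun i => compile (ts i)
  | .efunc f ts => .var (yVar r E (.efunc f ts))

noncomputable def compileF : EQF L F ar → TF L
  | .rel R ts => .rel R fun i => compile r E (ts i)
  | .nrel R ts => .nrel R fun i => compile r E (ts i)
  | .teq t u => .teq (compile r E t) (compile r E u)
  | .tne t u => .tne (compile r E t) (compile r E u)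
  | .and φ ψ => .and (compileF φ) (compileF ψ)
  | .or φ ψ => .or (compileF φ) (compileF ψ)

/-- `⋁ᵢ tᵢ(x̄) ≠ t'ᵢ(x̄') ∨ y_{f t̄} = y'_{f t̄'}`. -/
noncomputable def consFormula (f : F) (ts ts' : Fin (ar f) → ETerm L F ar) : TF L :=
  (List.ofFn fun i => TF.tne (compile r E (ts i)) ((compile r E (ts' i)).relabel (primeVar r))).foldr
    .or (.teq (.var (yVar r E (.efunc f ts))) (.var (yVar r E (.efunc f ts') + 1)))

open Classical in
noncomputable def consFormulas : ETerm L F ar → ETerm L F ar → List (TF L)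
  | .efunc f ts, .efunc f' ts' => if h : f' = f then [consFormula r E f ts (h ▸ ts')] else []
  | _, _ => []

noncomputable def depAtoms : List (TF L) :=
  E.map (fun e => .indep (List.range r) [yVar r E e] [yVar r E e]) ++
    E.map fun e => .indep ((List.range r).map (r + ·)) [yVar r E e + 1] [yVar r E e + 1]

noncomputable def consAtoms : List (TF L) :=
  E.flatMap fun e₁ => E.flatMap (consFormulas r E e₁)

noncomputable def skolemMatrix (θ : EQF L F ar) : TF L :=
  (depAtoms r E ++ consAtoms r E).foldr .and (compileF r E θ)

def yVars : List ℕ := (List.range (2 * E.length)).map (2 * r + ·)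

/-- `∀x̄ ∀x̄' ∃ȳ ∃ȳ' (⋀ₑ y_e ⊥_x̄ y_e ∧ ⋀ₑ y'_e ⊥_x̄' y'_e ∧ ⋀ consistency ∧ θ[y_e / e])`. -/
noncomputable def skolemSentence (θ : EQF L F ar) : TF L :=
  alls (List.range (2 * r)) (exs (yVars r E) (skolemMatrix r E θ))

end Translation

section TranslationBounds

variable {L : FirstOrder.Language.{u, v}} {F : Type} {ar : F → ℕ}
variable {r : ℕ} {E : List (ETerm L F ar)}

lemma yVar_add_one_lt {e : ETerm L F ar} (he : e ∈ E) :
    yVar r E e + 1 < 2 * r + 2 * E.length := by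
  classical
  have := List.idxOf_lt_length_of_mem he
  unfold yVar
  convert (by omega : 2 * r + 2 * E.idxOf e + 1 < 2 * r + 2 * E.length)

lemma le_yVar (e : ETerm L F ar) : 2 * r ≤ yVar r E e := by
  unfold yVar
  omega

lemma primeVar_yVar (e : ETerm L F ar) : primeVar r (yVar r E e) = yVar r E e + 1 := by
  have := le_yVar (r := r) (E := E) e
  rw [primeVar, if_neg (by omega)]

lemma mem_yVars {i : ℕ} : i ∈ yVars r E ↔ 2 * r ≤ i ∧ i < 2 * r + 2 * E.length := by
  simp only [yVars, List.mem_map, List.mem_range]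
  constructor
  · rintro ⟨j, hj, rfl⟩
    omega
  · rintro ⟨h₁, h₂⟩
    exact ⟨i - 2 * r, by omega, by omega⟩

lemma ETerm.Compilable.tvars_compile {t : ETerm L F ar} (ht : t.Compilable r E) :
    ∀ i ∈ tvars (compile r E t), i < r ∨ ∃ e ∈ E, i = yVar r E e := by
  induction ht with
  | var h => simpa [compile, tvars] using .inl h
  | func g _ ih =>
    simp only [compile, tvars, Set.mem_iUnion]
    rintro i ⟨k, hk⟩
    exact ih k i hk
  | efunc f he _ _ => simpa [compile, tvars] using .inr ⟨_, he, rfl⟩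

lemma ETerm.Compilable.tvars_compile_subset {t : ETerm L F ar} (ht : t.Compilable r E) :
    tvars (compile r E t) ⊆ Set.Iio (2 * r + 2 * E.length) := by
  intro i hi
  rcases ht.tvars_compile i hi with h | ⟨e, he, rfl⟩
  · exact Set.mem_Iio.2 (by omega)
  · exact Set.mem_Iio.2 (by have := yVar_add_one_lt (r := r) he; omega)

lemma ETerm.Compilable.tvars_compile_relabel_subset {t : ETerm L F ar} (ht : t.Compilable r E) :
    tvars ((compile r E t).relabel (primeVar r)) ⊆ Set.Iio (2 * r + 2 * E.length) := by
  rw [tvars_relabel]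
  rintro _ ⟨i, hi, rfl⟩
  rcases ht.tvars_compile i hi with h | ⟨e, he, rfl⟩
  · simp only [primeVar, if_pos h, Set.mem_Iio]
    omega
  · rw [primeVar_yVar, Set.mem_Iio]
    have := yVar_add_one_lt (r := r) he
    omega

lemma isFO_compileF (θ : EQF L F ar) : isFO (compileF r E θ) := by
  induction θ <;> simp_all [compileF, isFO]

lemma quantFree_compileF (θ : EQF L F ar) : quantFree (compileF r E θ) := by
  induction θ <;> simp_all [compileF, quantFree]

lemma freeVars_compileF_subset {θ : EQF L F ar} (hθ : ∀ t ∈ θ.terms, t.Compilable r E) :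
    freeVars (compileF r E θ) ⊆ Set.Iio (2 * r + 2 * E.length) := by
  induction θ with
  | rel _ ts | nrel _ ts =>
    exact Set.iUnion_subset fun i => (hθ _ (List.mem_ofFn.2 ⟨i, rfl⟩)).tvars_compile_subset
  | teq t u | tne t u =>
    exact Set.union_subset (hθ t (by simp [EQF.terms])).tvars_compile_subset
      (hθ u (by simp [EQF.terms])).tvars_compile_subset
  | and φ ψ ihφ ihψ | or φ ψ ihφ ihψ =>
    exact Set.union_subset (ihφ fun t ht => hθ t (List.mem_append_left _ ht))
      (ihψ fun t ht => hθ t (List.mem_append_right _ ht))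

lemma isFO_consFormula (f : F) (ts ts' : Fin (ar f) → ETerm L F ar) :
    isFO (consFormula r E f ts ts') :=
  isFO_foldr_or (by simp [isFO]) trivial

lemma quantFree_consFormula (f : F) (ts ts' : Fin (ar f) → ETerm L F ar) :
    quantFree (consFormula r E f ts ts') :=
  quantFree_foldr_or (by simp [quantFree]) trivial

lemma freeVars_consFormula_subset {f : F} {ts ts' : Fin (ar f) → ETerm L F ar}
    (h : (ETerm.efunc f ts).Compilable r E) (h' : (ETerm.efunc f ts').Compilable r E) :
    freeVars (consFormula r E f ts ts') ⊆ Set.Iio (2 * r + 2 * E.length) := by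
  cases h with | efunc _ he hts =>
  cases h' with | efunc _ he' hts' =>
  refine freeVars_foldr_or_subset ?_ ?_
  · simp only [List.mem_ofFn, forall_exists_index]
    rintro _ i rfl
    exact Set.union_subset (hts i).tvars_compile_subset (hts' i).tvars_compile_relabel_subset
  · have := yVar_add_one_lt (r := r) he
    have := yVar_add_one_lt (r := r) he'
    simp [freeVars, tvars, Set.insert_subset_iff]
    omega

lemma mem_consAtoms {ψ : TF L} (h : ψ ∈ consAtoms r E) :
    ∃ (f : F) (ts ts' : Fin (ar f) → ETerm L F ar),
      ETerm.efunc f ts ∈ E ∧ ETerm.efunc f ts' ∈ E ∧ ψ = consFormula r E f ts ts' := by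
  simp only [consAtoms, List.mem_flatMap] at h
  obtain ⟨e₁, he₁, e₂, he₂, h⟩ := h
  cases e₁ <;> cases e₂ <;> simp only [consFormulas, List.not_mem_nil] at h
  split_ifs at h with hf
  · subst hf
    exact ⟨_, _, _, he₁, he₂, List.mem_singleton.1 h⟩
  · simp at h

lemma consFormula_mem_consAtoms {f : F} {ts ts' : Fin (ar f) → ETerm L F ar}
    (h : ETerm.efunc f ts ∈ E) (h' : ETerm.efunc f ts' ∈ E) :
    consFormula r E f ts ts' ∈ consAtoms r E :=
  List.mem_flatMap.2 ⟨_, h, List.mem_flatMap.2 ⟨_, h', by simp [consFormulas]⟩⟩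

end TranslationBounds

section SentenceShape

variable {L : FirstOrder.Language.{u, v}} {F : Type} {ar : F → ℕ}
variable {r : ℕ} {E : List (ETerm L F ar)}

lemma mem_depAtoms {ψ : TF L} (h : ψ ∈ depAtoms (F := F) (ar := ar) r E) :
    ∃ xs : List ℕ, ∃ e ∈ E, ∃ y ∈ [yVar r E e, yVar r E e + 1], ψ = .indep xs [y] [y] ∧
      ∀ i ∈ xs, i < 2 * r := by
  simp only [depAtoms, List.mem_append, List.mem_map] at h
  rcases h with ⟨e, he, rfl⟩ | ⟨e, he, rfl⟩
  · exact ⟨_, e, he, _, List.mem_cons_self, rfl, fun i hi => by simp at hi; omega⟩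
  · exact ⟨_, e, he, _, by simp, rfl, fun i hi => by simp at hi; omega⟩

lemma quantFree_skolemMatrix (θ : EQF L F ar) : quantFree (skolemMatrix r E θ) := by
  refine quantFree_foldr_and (fun ψ hψ => ?_) (quantFree_compileF θ)
  rcases List.mem_append.1 hψ with h | h
  · obtain ⟨_, _, _, _, _, rfl, _⟩ := mem_depAtoms h
    trivial
  · obtain ⟨f, ts, ts', -, -, rfl⟩ := mem_consAtoms h
    exact quantFree_consFormula f ts ts'

lemma freeVars_skolemSentence {θ : EQF L F ar} (hE : ∀ e ∈ E, e.Compilable r E)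
    (hθ : ∀ t ∈ θ.terms, t.Compilable r E) : freeVars (skolemSentence r E θ) = ∅ := by
  have hmatrix : freeVars (skolemMatrix r E θ) ⊆ Set.Iio (2 * r + 2 * E.length) := by
    refine freeVars_foldr_and_subset (fun ψ hψ => ?_) (freeVars_compileF_subset hθ)
    rcases List.mem_append.1 hψ with h | h
    · obtain ⟨xs, e, he, y, hy, rfl, hxs⟩ := mem_depAtoms h
      have := yVar_add_one_lt (r := r) he
      intro i hi
      simp only [freeVars, List.append_assoc, List.mem_append, List.mem_singleton, or_self,
        Set.mem_ofPred_eq] at hi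
      simp only [List.mem_cons, List.not_mem_nil, or_false] at hy
      rcases hi with hi | rfl
      · have := hxs i hi
        exact Set.mem_Iio.2 (by omega)
      · exact Set.mem_Iio.2 (by omega)
    · obtain ⟨f, ts, ts', he, he', rfl⟩ := mem_consAtoms h
      exact freeVars_consFormula_subset (hE _ he) (hE _ he')
  rw [skolemSentence, freeVars_alls, freeVars_exs, Set.eq_empty_iff_forall_notMem]
  rintro i ⟨⟨hi, hy⟩, hx⟩
  have := hmatrix hi
  simp only [Set.mem_Iio, Set.mem_ofPred_eq, mem_yVars, List.mem_range] at this hy hx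
  omega

lemma nodup_boundVars_skolemSentence (θ : EQF L F ar) :
    (boundVars (skolemSentence r E θ)).Nodup := by
  rw [skolemSentence, boundVars_alls, boundVars_exs,
    boundVars_eq_nil_of_quantFree (quantFree_skolemMatrix θ), List.append_nil]
  refine List.nodup_range.append (List.nodup_range.map fun _ _ h => by omega) ?_
  intro i hi hy
  rw [mem_yVars] at hy
  rw [List.mem_range] at hi
  omega

lemma uCount_skolemSentence (θ : EQF L F ar) : uCount (skolemSentence r E θ) = 2 * r := by
  rw [skolemSentence, uCount_alls, uCount_exs,
    uCount_eq_zero_of_quantFree (quantFree_skolemMatrix θ), List.length_range, add_zero]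

lemma not_hasDep_skolemSentence (θ : EQF L F ar) : ¬ hasDep (skolemSentence r E θ) := by
  rw [skolemSentence, hasDep_alls, hasDep_exs]
  refine not_hasDep_foldr_and (fun ψ hψ => ?_) (not_hasDep_of_isFO (isFO_compileF θ))
  rcases List.mem_append.1 hψ with h | h
  · obtain ⟨_, _, _, _, _, rfl, _⟩ := mem_depAtoms h
    exact id
  · obtain ⟨f, ts, ts', -, -, rfl⟩ := mem_consAtoms h
    exact not_hasDep_of_isFO (isFO_consFormula f ts ts')

lemma not_hasInc_skolemSentence (θ : EQF L F ar) : ¬ hasInc (skolemSentence r E θ) := by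
  rw [skolemSentence, hasInc_alls, hasInc_exs]
  refine not_hasInc_foldr_and (fun ψ hψ => ?_) (not_hasInc_of_isFO (isFO_compileF θ))
  rcases List.mem_append.1 hψ with h | h
  · obtain ⟨_, _, _, _, _, rfl, _⟩ := mem_depAtoms h
    exact id
  · obtain ⟨f, ts, ts', -, -, rfl⟩ := mem_consAtoms h
    exact not_hasInc_of_isFO (isFO_consFormula f ts ts')

end SentenceShape

section Realization

variable {L : FirstOrder.Language.{u, v}} {F : Type} {ar : F → ℕ} {M : Type w} [L.Structure M]
variable {r : ℕ} {E : List (ETerm L F ar)} {fi : ∀ f : F, (Fin (ar f) → M) → M}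

lemma ETerm.Compilable.realize_congr {t : ETerm L F ar} (ht : t.Compilable r E)
    {ω ω' : ℕ → M} (h : ∀ i < r, ω i = ω' i) : t.realize fi ω = t.realize fi ω' := by
  induction ht with
  | var hn => exact h _ hn
  | func g _ ih => exact congrArg (funMap g) (funext ih)
  | efunc f _ _ ih => exact congrArg (fi f) (funext ih)

variable (r E fi) in
structure Realizes (ω : ℕ → M) (s : ℕ → Option M) : Prop where
  var : ∀ i < r, s i = some (ω i)
  efunc : ∀ f ts, ETerm.efunc f ts ∈ E →
    s (yVar r E (.efunc f ts)) = some (fi f fun i => (ts i).realize fi ω)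

namespace Realizes

variable {ω : ℕ → M} {s : ℕ → Option M}

lemma oreal_compile (hs : Realizes r E fi ω s) {t : ETerm L F ar} (ht : t.Compilable r E) :
    oreal s (compile r E t) = some (t.realize fi ω) := by
  induction ht with
  | var hn => exact hs.var _ hn
  | func g _ ih => exact oreal_func_some ih
  | efunc f he _ _ => exact hs.efunc f _ he

lemma foSat_compileF_iff (hs : Realizes r E fi ω s) {θ : EQF L F ar}
    (hθ : ∀ t ∈ θ.terms, t.Compilable r E) : foSat M s (compileF r E θ) ↔ θ.realize fi ω := by
  induction θ with
  | rel R ts | nrel R ts =>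
    have h i := hs.oreal_compile (hθ _ (List.mem_ofFn.2 ⟨i, rfl⟩))
    simp only [foSat, compileF, EQF.realize, h, Option.some_inj]
    exact ⟨fun ⟨v, hv, hR⟩ => funext hv ▸ hR, fun hR => ⟨_, fun _ => rfl, hR⟩⟩
  | teq t u | tne t u =>
    simp [foSat, compileF, EQF.realize, hs.oreal_compile (hθ t (by simp [EQF.terms])),
      hs.oreal_compile (hθ u (by simp [EQF.terms])), eq_comm]
  | and φ ψ ihφ ihψ | or φ ψ ihφ ihψ =>
    simp only [foSat, compileF, EQF.realize]
    rw [ihφ fun t ht => hθ t (List.mem_append_left _ ht),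
      ihψ fun t ht => hθ t (List.mem_append_right _ ht)]

end Realizes

variable {s : ℕ → Option M} {f : F} {ts ts' : Fin (ar f) → ETerm L F ar}

lemma foSat_consFormula_iff :
    foSat M s (consFormula r E f ts ts') ↔
      (∃ i a b, oreal s (compile r E (ts i)) = some a ∧
        oreal (s ∘ primeVar r) (compile r E (ts' i)) = some b ∧ a ≠ b) ∨
      ∃ a, s (yVar r E (.efunc f ts)) = some a ∧ s (yVar r E (.efunc f ts') + 1) = some a := by
  simp [consFormula, foSat_foldr_or, foSat, oreal_relabel, oreal]

lemma exists_eq_of_foSat_consFormula (h : foSat M s (consFormula r E f ts ts'))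
    (hargs : ∀ i, oreal s (compile r E (ts i)) = oreal (s ∘ primeVar r) (compile r E (ts' i))) :
    ∃ a, s (yVar r E (.efunc f ts)) = some a ∧ s (yVar r E (.efunc f ts') + 1) = some a := by
  refine foSat_consFormula_iff.1 h |>.resolve_left ?_
  rintro ⟨i, a, b, ha, hb, hab⟩
  rw [hargs i, hb, Option.some_inj] at ha
  exact hab ha.symm

lemma foSat_consFormula_of_realizes {ω ω' : ℕ → M} (hs : Realizes r E fi ω s)
    (hs' : Realizes r E fi ω' (s ∘ primeVar r)) (h : (ETerm.efunc f ts).Compilable r E)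
    (h' : (ETerm.efunc f ts').Compilable r E) : foSat M s (consFormula r E f ts ts') := by
  rw [foSat_consFormula_iff]
  by_cases hargs : ∀ i, (ts i).realize fi ω = (ts' i).realize fi ω'
  · right
    cases h with | efunc _ he _ =>
    cases h' with | efunc _ he' _ =>
    have hy' := hs'.efunc f _ he'
    rw [Function.comp_apply, primeVar_yVar] at hy'
    refine ⟨_, hs.efunc f _ he, hy'.trans ?_⟩
    simp only [funext hargs]
  · obtain ⟨i, hi⟩ := not_forall.1 hargs
    exact .inl ⟨i, _, _, hs.oreal_compile (h.of_efunc i), hs'.oreal_compile (h'.of_efunc i), hi⟩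

end Realization

section MatrixSemantics

variable {L : FirstOrder.Language.{u, v}} {F : Type} {ar : F → ℕ} {M : Type w} [L.Structure M]
variable {r : ℕ} {E : List (ETerm L F ar)}

lemma strictSat_dep_range_iff {m : ℕ} {τ : (ℕ → M) → ℕ → Option M}
    (hτ : ∀ w, ∀ i < m, τ w i = some (w i)) {xs : List ℕ} (hxs : ∀ i ∈ xs, i < m) (y : ℕ) :
    strictSat (L := L) M (Set.range τ) (.dep xs y) ↔
      ∀ w w', (∀ i ∈ xs, w i = w' i) → τ w y = τ w' y := by
  have hmap : ∀ w w', xs.map (τ w) = xs.map (τ w') ↔ ∀ i ∈ xs, w i = w' i := fun w w' => by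
    rw [List.map_inj_left]
    refine forall₂_congr fun i hi => ?_
    rw [hτ w i (hxs i hi), hτ w' i (hxs i hi), Option.some_inj]
  simp only [strictSat, Set.forall_mem_range, hmap]

structure IsConsistentTeam (r : ℕ) (E : List (ETerm L F ar)) (τ : (ℕ → M) → ℕ → Option M) :
    Prop where
  var : ∀ w, ∀ i < 2 * r, τ w i = some (w i)
  dep : ∀ e ∈ E, ∀ w w', (∀ i < r, w i = w' i) → τ w (yVar r E e) = τ w' (yVar r E e)
  dep' : ∀ e ∈ E, ∀ w w', (∀ i < r, w (r + i) = w' (r + i)) →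
    τ w (yVar r E e + 1) = τ w' (yVar r E e + 1)
  cons : ∀ w, ∀ ψ ∈ consAtoms r E, foSat M (τ w) ψ

lemma strictSat_skolemMatrix_iff {τ : (ℕ → M) → ℕ → Option M}
    (hτ : ∀ w, ∀ i < 2 * r, τ w i = some (w i)) (θ : EQF L F ar) :
    strictSat M (Set.range τ) (skolemMatrix r E θ) ↔
      IsConsistentTeam r E τ ∧ ∀ w, foSat M (τ w) (compileF r E θ) := by
  have hcons : ∀ ψ ∈ consAtoms r E,
      strictSat M (Set.range τ) ψ ↔ ∀ w, foSat M (τ w) ψ := fun ψ hψ => by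
    obtain ⟨f, ts, ts', -, -, rfl⟩ := mem_consAtoms hψ
    rw [strictSat_iff_foSat (isFO_consFormula f ts ts') (quantFree_consFormula f ts ts'),
      Set.forall_mem_range]
  have hx : ∀ i ∈ List.range r, i < 2 * r := fun i hi => by
    rw [List.mem_range] at hi
    omega
  have hx' : ∀ i ∈ (List.range r).map (r + ·), i < 2 * r := by
    simp only [List.forall_mem_map, List.mem_range]
    omega
  simp only [skolemMatrix, strictSat_foldr_and, List.forall_mem_append, depAtoms,
    List.forall_mem_map, strictSat_indep_self_iff, strictSat_dep_range_iff hτ hx,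
    strictSat_dep_range_iff hτ hx', List.mem_range, List.forall_mem_map]
  rw [strictSat_iff_foSat (isFO_compileF θ) (quantFree_compileF θ), Set.forall_mem_range,
    forall₂_congr hcons]
  constructor
  · rintro ⟨⟨⟨hdep, hdep'⟩, hc⟩, hθ⟩
    exact ⟨⟨hτ, hdep, hdep', fun w ψ hψ => hc ψ hψ w⟩, hθ⟩
  · rintro ⟨⟨-, hdep, hdep', hc⟩, hθ⟩
    exact ⟨⟨⟨hdep, hdep'⟩, fun ψ hψ w => hc w ψ hψ⟩, hθ⟩

variable {fi : ∀ f : F, (Fin (ar f) → M) → M}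

lemma IsConsistentTeam.of_realize {τ : (ℕ → M) → ℕ → Option M}
    (hτ : ∀ w, ∀ i < 2 * r, τ w i = some (w i)) (hE : ∀ e ∈ E, e.Compilable r E)
    (hy : ∀ w, ∀ e ∈ E, τ w (yVar r E e) = some (e.realize fi w))
    (hy' : ∀ w, ∀ e ∈ E, τ w (yVar r E e + 1) = some (e.realize fi fun i => w (r + i))) :
    IsConsistentTeam r E τ := by
  refine ⟨hτ, fun e he w w' hw => ?_, fun e he w w' hw => ?_, fun w ψ hψ => ?_⟩
  · rw [hy w e he, hy w' e he, (hE e he).realize_congr hw]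
  · rw [hy' w e he, hy' w' e he, (hE e he).realize_congr hw]
  · obtain ⟨f, ts, ts', he, he', rfl⟩ := mem_consAtoms hψ
    have hs : Realizes r E fi w (τ w) :=
      ⟨fun i hi => hτ w i (by omega), fun f ts he => hy w _ he⟩
    have hs' : Realizes r E fi (fun i => w (r + i)) (τ w ∘ primeVar r) :=
      ⟨fun i hi => by simp [primeVar, hi, hτ w (r + i) (by omega)],
        fun f ts he => by simp [primeVar_yVar, hy' w _ he, ETerm.realize]⟩
    exact foSat_consFormula_of_realizes hs hs' (hE _ he) (hE _ he')

end MatrixSemantics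

section Extraction

variable {L : FirstOrder.Language.{u, v}} {F : Type} {ar : F → ℕ} {M : Type w} [L.Structure M]
variable {r : ℕ} {E : List (ETerm L F ar)} {τ : (ℕ → M) → ℕ → Option M}

namespace IsConsistentTeam

lemma oreal_compile_congr (hτ : IsConsistentTeam r E τ) {t : ETerm L F ar}
    (ht : t.Compilable r E) {w w' : ℕ → M} (h : ∀ i < r, w i = w' i) :
    oreal (τ w) (compile r E t) = oreal (τ w') (compile r E t) := by
  induction ht with
  | @var n hn =>
    change τ w n = τ w' n
    rw [hτ.var w n (by omega), hτ.var w' n (by omega), h n hn]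
  | func g _ ih => exact oreal_func_congr ih
  | efunc f he _ _ => exact hτ.dep _ he w w' h

/-- Consistency of each `e ∈ E` with itself forces `y_e` and `y'_e` to store the same function
of the respective blocks `x̄` and `x̄'`. -/
lemma oreal_compile_primeVar (hτ : IsConsistentTeam r E τ) {t : ETerm L F ar}
    (ht : t.Compilable r E) {w w' : ℕ → M} (h : ∀ i < r, w i = w' (r + i)) :
    oreal (τ w) (compile r E t) = oreal (τ w' ∘ primeVar r) (compile r E t) := by
  induction ht generalizing w w' with
  | @var n hn =>
    change τ w n = τ w' (primeVar r n)
    rw [primeVar, if_pos hn, hτ.var w n (by omega), hτ.var w' _ (by omega), h n hn]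
  | func g _ ih => exact oreal_func_congr fun i => ih i h
  | @efunc f ts he _ ih =>
    change τ w _ = τ w' (primeVar r _)
    rw [primeVar_yVar]
    set u : ℕ → M := fun i => if i < r then w i else w' i
    have hu : ∀ i < r, u i = u (r + i) := fun i hi => by simp [u, hi, h i hi]
    obtain ⟨a, ha, ha'⟩ := exists_eq_of_foSat_consFormula
      (hτ.cons u _ (consFormula_mem_consAtoms he he)) fun i => ih i hu
    rw [hτ.dep _ he w u (fun i hi => by simp [u, hi]), ha, ← ha',
      hτ.dep' _ he u w' (fun i hi => by simp [u])]

lemma exists_eq_of_args (hτ : IsConsistentTeam r E τ) (hE : ∀ e ∈ E, e.Compilable r E)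
    {f : F} {ts ts' : Fin (ar f) → ETerm L F ar} (he : ETerm.efunc f ts ∈ E)
    (he' : ETerm.efunc f ts' ∈ E) {w w' : ℕ → M}
    (h : ∀ i, oreal (τ w) (compile r E (ts i)) = oreal (τ w') (compile r E (ts' i))) :
    ∃ a, τ w (yVar r E (.efunc f ts)) = some a ∧ τ w' (yVar r E (.efunc f ts')) = some a := by
  set u : ℕ → M := fun i => if i < r then w i else w' (i - r)
  have hwu : ∀ i < r, w i = u i := fun i hi => by simp [u, hi]
  have hw'u : ∀ i < r, w' i = u (r + i) := fun i hi => by simp [u]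
  obtain ⟨a, ha, ha'⟩ := exists_eq_of_foSat_consFormula
    (hτ.cons u _ (consFormula_mem_consAtoms he he')) fun i => by
      rw [← hτ.oreal_compile_congr ((hE _ he).of_efunc i) hwu, h i,
        hτ.oreal_compile_primeVar ((hE _ he').of_efunc i) hw'u]
  have hy' := hτ.oreal_compile_primeVar (hE _ he') hw'u
  simp only [compile, oreal, Function.comp_apply, primeVar_yVar] at hy'
  exact ⟨a, (hτ.dep _ he w u hwu).trans ha, hy'.trans ha'⟩

end IsConsistentTeam

open Classical in
/-- The functions read off a team: `f ā` is the value stored in `y_{f t̄}` at any `w` where the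
arguments `t̄` evaluate to `ā`. -/
noncomputable def teamSkolemFunctions [Nonempty M] (r : ℕ) (E : List (ETerm L F ar))
    (τ : (ℕ → M) → ℕ → Option M) (f : F) (a : Fin (ar f) → M) : M :=
  if h : ∃ p : (Fin (ar f) → ETerm L F ar) × (ℕ → M),
      ETerm.efunc f p.1 ∈ E ∧ ∀ i, oreal (τ p.2) (compile r E (p.1 i)) = some (a i) then
    (τ h.choose.2 (yVar r E (.efunc f h.choose.1))).getD (Classical.arbitrary M)
  else Classical.arbitrary M

lemma IsConsistentTeam.oreal_compile [Nonempty M] (hτ : IsConsistentTeam r E τ)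
    (hE : ∀ e ∈ E, e.Compilable r E) {t : ETerm L F ar} (ht : t.Compilable r E) (w : ℕ → M) :
    oreal (τ w) (compile r E t) = some (t.realize (teamSkolemFunctions r E τ) w) := by
  induction ht generalizing w with
  | @var n hn => exact hτ.var w n (by omega)
  | func g _ ih => exact oreal_func_some fun i => ih i w
  | @efunc f ts he _ ih =>
    have hex : ∃ p : (Fin (ar f) → ETerm L F ar) × (ℕ → M), ETerm.efunc f p.1 ∈ E ∧
        ∀ i, oreal (τ p.2) (compile r E (p.1 i)) = some ((ts i).realize _ w) :=
      ⟨(ts, w), he, fun i => ih i w⟩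
    obtain ⟨a, ha, ha'⟩ := hτ.exists_eq_of_args hE hex.choose_spec.1 he fun i =>
      (hex.choose_spec.2 i).trans (ih i w).symm
    change τ w _ = some (teamSkolemFunctions r E τ f _)
    rw [teamSkolemFunctions, dif_pos hex, ha, ha', Option.getD_some]

lemma IsConsistentTeam.realizes [Nonempty M] (hτ : IsConsistentTeam r E τ)
    (hE : ∀ e ∈ E, e.Compilable r E) (w : ℕ → M) :
    Realizes r E (teamSkolemFunctions r E τ) w (τ w) :=
  ⟨fun i hi => hτ.var w i (by omega), fun f _ he => hτ.oreal_compile hE (hE _ he) w⟩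

end Extraction

section Equivalence

variable {L : FirstOrder.Language.{u, v}} {F : Type} {ar : F → ℕ} {M : Type w} [L.Structure M]
variable [Nonempty M] {r : ℕ} {E : List (ETerm L F ar)}

/-- The choice of `y_{2r+2j+p}` (`p < 2`) made from given Skolem functions: the value of the
`j`-th term of `E` at the block `x̄` (`p = 0`) or `x̄'` (`p = 1`) of `s`. -/
noncomputable def skolemWitness (r : ℕ) (E : List (ETerm L F ar))
    (fi : ∀ f : F, (Fin (ar f) → M) → M) (s : ℕ → Option M) (i : ℕ) : M :=
  match E[(i - 2 * r) / 2]? with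
  | some e => e.realize fi fun q => (s ((i - 2 * r) % 2 * r + q)).getD (Classical.arbitrary M)
  | none => Classical.arbitrary M

variable {fi : ∀ f : F, (Fin (ar f) → M) → M}

lemma skolemWitness_yVar_add {e : ETerm L F ar} (he : e ∈ E) (s : ℕ → Option M) {p : ℕ}
    (hp : p < 2) : skolemWitness r E fi s (yVar r E e + p) =
      e.realize fi fun q => (s (p * r + q)).getD (Classical.arbitrary M) := by
  classical
  have hdiv : (yVar r E e + p - 2 * r) / 2 = E.idxOf e := by unfold yVar; omega
  have hmod : (yVar r E e + p - 2 * r) % 2 = p := by unfold yVar; omega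
  rw [skolemWitness, hdiv, hmod, List.getElem?_idxOf he]

lemma skolemWitness_update (hE : ∀ e ∈ E, e.Compilable r E) (s : ℕ → Option M) {v : ℕ}
    (hv : 2 * r ≤ v) (m : M) :
    skolemWitness r E fi (Function.update s v (some m)) = skolemWitness r E fi s := by
  funext i
  unfold skolemWitness
  split
  · next e he =>
    refine (hE e (List.mem_of_getElem? he)).realize_congr fun q hq => ?_
    have : (i - 2 * r) % 2 < 2 := Nat.mod_lt _ two_pos
    rw [Function.update_of_ne (by nlinarith)]
  · rfl

variable (r E fi) in
noncomputable def skolemTeam (w : ℕ → M) : ℕ → Option M :=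
  let s := assignOn (List.range (2 * r)) w (emptyAssign M)
  assignOn (yVars r E) (skolemWitness r E fi s) s

lemma skolemTeam_of_lt (w : ℕ → M) {i : ℕ} (hi : i < 2 * r) :
    skolemTeam r E fi w i = some (w i) := by
  rw [skolemTeam, assignOn_of_not_mem (by rw [mem_yVars]; omega),
    assignOn_of_mem (List.mem_range.2 hi)]

lemma skolemTeam_yVar_add (hE : ∀ e ∈ E, e.Compilable r E) (w : ℕ → M) {e : ETerm L F ar}
    (he : e ∈ E) {p : ℕ} (hp : p < 2) :
    skolemTeam r E fi w (yVar r E e + p) = some (e.realize fi fun q => w (p * r + q)) := by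
  have := le_yVar (r := r) (E := E) e
  have := yVar_add_one_lt (r := r) he
  rw [skolemTeam, assignOn_of_mem (mem_yVars.2 ⟨by omega, by omega⟩),
    skolemWitness_yVar_add he _ hp]
  refine congrArg some ((hE e he).realize_congr fun q hq => ?_)
  rw [assignOn_of_mem (List.mem_range.2 (by nlinarith)), Option.getD_some]

lemma tTrue_skolemSentence_of_realize (hE : ∀ e ∈ E, e.Compilable r E) {θ : EQF L F ar}
    (hθ : ∀ t ∈ θ.terms, t.Compilable r E) (hfi : ∀ ω, θ.realize fi ω) :
    tTrue M (skolemSentence r E θ) := by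
  rw [skolemSentence, tTrue_alls_range_iff]
  refine strictSat_exs_of_assignOn (skolemWitness r E fi)
    (fun s v hv m => skolemWitness_update hE s (mem_yVars.1 hv).1 m) ?_
  rw [← Set.range_comp]
  have hτ : ∀ w, ∀ i < 2 * r, skolemTeam r E fi w i = some (w i) :=
    fun w i => skolemTeam_of_lt w
  have hy : ∀ w, ∀ e ∈ E, skolemTeam r E fi w (yVar r E e) = some (e.realize fi w) :=
    fun w e he => by simpa using skolemTeam_yVar_add hE w he two_pos
  have hy' : ∀ w, ∀ e ∈ E,
      skolemTeam r E fi w (yVar r E e + 1) = some (e.realize fi fun i => w (r + i)) :=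
    fun w e he => by simpa using skolemTeam_yVar_add hE w he one_lt_two
  refine (strictSat_skolemMatrix_iff hτ θ).2 ⟨.of_realize hτ hE hy hy', fun w => ?_⟩
  have hs : Realizes r E fi w (skolemTeam r E fi w) :=
    ⟨fun i hi => hτ w i (by omega), fun f _ he => hy w _ he⟩
  exact (hs.foSat_compileF_iff hθ).2 (hfi w)

lemma esoTrue_of_tTrue_skolemSentence (hE : ∀ e ∈ E, e.Compilable r E) {θ : EQF L F ar}
    (hθ : ∀ t ∈ θ.terms, t.Compilable r E) (h : tTrue M (skolemSentence r E θ)) :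
    esoTrue M θ := by
  rw [skolemSentence, tTrue_alls_range_iff] at h
  obtain ⟨g, hg, h⟩ := exists_of_strictSat_exs h
  rw [← Set.range_comp] at h
  have hτ : ∀ w, ∀ i < 2 * r, (g ∘ fun w => assignOn (List.range (2 * r)) w (emptyAssign M)) w i
      = some (w i) := fun w i hi => by
    rw [Function.comp_apply, hg _ i (by rw [mem_yVars]; omega),
      assignOn_of_mem (List.mem_range.2 hi)]
  obtain ⟨hcons, hmatrix⟩ := (strictSat_skolemMatrix_iff hτ θ).1 h
  exact ⟨_, fun w => ((hcons.realizes hE w).foSat_compileF_iff hθ).1 (hmatrix w)⟩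

lemma tTrue_skolemSentence_iff (hE : ∀ e ∈ E, e.Compilable r E) {θ : EQF L F ar}
    (hθ : ∀ t ∈ θ.terms, t.Compilable r E) : tTrue M (skolemSentence r E θ) ↔ esoTrue M θ :=
  ⟨esoTrue_of_tTrue_skolemSentence hE hθ,
    fun ⟨_, hfi⟩ => tTrue_skolemSentence_of_realize hE hθ hfi⟩

end Equivalence

/-- For every sentence `φ ∈ ESO_f(k∀)` (in Skolem normal form `∃f₁…∃fₙ ∀x₁…∀x_r θ`
with `r ≤ k` and `θ` quantifier-free) there is a sentence `φ'` of independence logic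
with at most `2k` universal quantifiers (`φ' ∈ FO(⊥_c)(2k∀)`: only independence
atoms, every variable quantified exactly once) such that for all structures `A` with
at least two elements, `A ⊨ φ` iff `A ⊨ φ'` under strict team semantics. -/
theorem eso_to_independence {L : FirstOrder.Language.{u, v}} (k n : ℕ)
    (ar : Fin n → ℕ) (r : ℕ) (θ : EQF L (Fin n) ar) (hr : r ≤ k)
    (hv : θ.varsLT r) :
    ∃ φ' : TF L,
      freeVars φ' = ∅ ∧ (boundVars φ').Nodup ∧ uCount φ' ≤ 2 * k ∧
      ¬ hasDep φ' ∧ ¬ hasInc φ' ∧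
      ∀ (A : Type w) [L.Structure A], (∃ a b : A, a ≠ b) →
        (esoTrue A θ ↔ tTrue A φ') := by
  have hE e (he : e ∈ θ.efuncSubterms) := θ.compilable_of_mem_efuncSubterms hv he
  have hθ t (ht : t ∈ θ.terms) := θ.compilable_of_mem_terms hv ht
  refine ⟨skolemSentence r θ.efuncSubterms θ, freeVars_skolemSentence hE hθ,
    nodup_boundVars_skolemSentence θ, by rw [uCount_skolemSentence]; omega,
    not_hasDep_skolemSentence θ, not_hasInc_skolemSentence θ, fun A _ ⟨a, _, _⟩ => ?_⟩
  have : Nonempty A := ⟨a⟩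
  exact (tTrue_skolemSentence_iff hE hθ).symm

end TeamSem
end
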